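/- arXiv:2205.04694 — 3 statements merged into one kernel-verified Lean document; each statement's English description precedes it below -/
import Mathlib

section
/- Let (X,d) be a strict quasi-circular Robinson space with compatible circular order β, x ∈ X, and x' a farthest neighbor of x. Then the sets N = {u ∈ X : d(u,x) ≤ d(u,x')} and F = {u ∈ X : d(u,x) ≥ d(u,x')} are arcs of β. -/
/-- A circular order on `X`: a ternary relation satisfying Huntington's axioms
(CO1)-(CO4), holding only for triples of distinct points. -/
structure CircOrder (X : Type*) where
  btw : X → X → X → Prop
  distinct : ∀ {u v w}, btw u v w → u ≠ v ∧ v ≠ w ∧ u ≠ w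
  total : ∀ {u v w : X}, u ≠ v → v ≠ w → u ≠ w → btw u v w ∨ btw w v u
  asymm : ∀ {u v w}, btw u v w → ¬ btw w v u
  cyclic : ∀ {u v w}, btw u v w → btw v w u
  btw_trans : ∀ {u v w x}, btw u v w → btw u w x → btw u v x

/-- `x₀ ⋖ x₁ ⋖ ... ⋖ x_{n-1}`: the sequence contains at least three distinct
points and `β (x i) (x j) (x k)` holds for all `i < j < k` with distinct values. -/
def CircOrder.Chain {X : Type*} (C : CircOrder X) {n : ℕ} (x : Fin n → X) : Prop :=
  (∃ i j k : Fin n, x i ≠ x j ∧ x j ≠ x k ∧ x i ≠ x k) ∧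
  ∀ i j k : Fin n, i < j → j < k →
    x i ≠ x j → x j ≠ x k → x i ≠ x k → C.btw (x i) (x j) (x k)

/-- The arc from `a` to `b` (in the direction of the circular order). -/
def CircOrder.arc {X : Type*} (C : CircOrder X) (a b : X) : Set X :=
  {t | C.btw a t b} ∪ {a, b}

/-- `A` is an arc of the circular order: a nonempty proper subset with no four
distinct points `u, v ∈ A`, `s, t ∉ A` arranged cyclically as `u ⋖ s ⋖ v ⋖ t`. -/
def CircOrder.IsArc {X : Type*} (C : CircOrder X) (A : Set X) : Prop :=
  A.Nonempty ∧ A ≠ Set.univ ∧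
    ¬ ∃ u v s t : X, u ∈ A ∧ v ∈ A ∧ s ∉ A ∧ t ∉ A ∧ u ≠ v ∧ s ≠ t ∧
      C.Chain ![u, s, v, t]

/-- `d` is a dissimilarity on `X`. -/
def Dissim {X : Type*} (d : X → X → ℝ) : Prop :=
  (∀ x y, d x y = d y x) ∧ (∀ x y, 0 ≤ d x y) ∧ (∀ x y, d x y = 0 ↔ x = y)

/-- The set of farthest neighbors of `x`. -/
def Fset {X : Type*} (d : X → X → ℝ) (x : X) : Set X :=
  {y | ∀ z, d x z ≤ d x y}

/-- `β` is compatible in the pre-circular Robinson sense: every quadruple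
`x ⋖ y ⋖ z ⋖ t` satisfies `cR(x,y,z,t)`. -/
def preCompat {X : Type*} (C : CircOrder X) (d : X → X → ℝ) : Prop :=
  ∀ x y z t : X, C.Chain ![x, y, z, t] →
    min (max (d x y) (d y z)) (max (d x t) (d t z)) ≤ d x z

/-- `β` is compatible in the strictly pre-circular (= strictly circular)
Robinson sense: every quadruple of distinct points `x ⋖ y ⋖ z ⋖ t`
satisfies `scR(x,y,z,t)`. -/
def spreCompat {X : Type*} (C : CircOrder X) (d : X → X → ℝ) : Prop :=
  ∀ x y z t : X, List.Pairwise (· ≠ ·) [x, y, z, t] → C.Chain ![x, y, z, t] →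
    min (max (d x y) (d y z)) (max (d x t) (d t z)) < d x z

/-- `β` is compatible in the quasi-circular Robinson sense: every quadruple
`x ⋖ y ⋖ z ⋖ t` satisfies `qcR(x,y,z,t)`. -/
def qcCompat {X : Type*} (C : CircOrder X) (d : X → X → ℝ) : Prop :=
  ∀ x y z t : X, C.Chain ![x, y, z, t] → min (d y z) (d t z) ≤ d x z

/-- `β` is compatible in the strictly quasi-circular Robinson sense: every
quadruple of distinct points `x ⋖ y ⋖ z ⋖ t` satisfies `sqcR(x,y,z,t)`. -/
def sqcCompat {X : Type*} (C : CircOrder X) (d : X → X → ℝ) : Prop :=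
  ∀ x y z t : X, List.Pairwise (· ≠ ·) [x, y, z, t] → C.Chain ![x, y, z, t] →
    min (d y z) (d t z) < d x z

/-- The arc from `a` to `b`, with the linear order induced by the circular
order, is a Robinson space: any `u, v, w` arranged as `a ⋖ u ⋖ v ⋖ w ⋖ b`
satisfy the Robinson inequality. -/
def RobinsonOnArc {X : Type*} (C : CircOrder X) (d : X → X → ℝ) (a b : X) : Prop :=
  ∀ u v w : X, C.Chain ![a, u, v, w, b] → max (d u v) (d v w) ≤ d u w

/-- The left arc `L_x = {t ∈ M_x : x ⋖ t ⋖ F_x}`. -/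
def Lset {X : Type*} (C : CircOrder X) (d : X → X → ℝ) (x : X) : Set X :=
  {t | t ≠ x ∧ t ∉ Fset d x ∧ ∀ s ∈ Fset d x, C.btw x t s}

/-- The right arc `R_x = {t ∈ M_x : F_x ⋖ t ⋖ x}`. -/
def Rset {X : Type*} (C : CircOrder X) (d : X → X → ℝ) (x : X) : Set X :=
  {t | t ≠ x ∧ t ∉ Fset d x ∧ ∀ s ∈ Fset d x, C.btw s t x}

namespace Stmt17Aux

variable {X : Type*} (C : CircOrder X)

lemma cyc2 {u v w : X} (h : C.btw u v w) : C.btw w u v := C.cyclic (C.cyclic h)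

lemma chain4_of {a b c e : X} (h1 : C.btw a b c) (h2 : C.btw a b e)
    (h3 : C.btw a c e) (h4 : C.btw b c e) : C.Chain ![a,b,c,e] := by
  obtain ⟨hab, hbc, hac⟩ := C.distinct h1
  refine ⟨⟨0, 1, 2, by simpa using hab, by simpa using hbc, by simpa using hac⟩, ?_⟩
  intro i j k hij hjk _ _ _
  fin_cases i <;> fin_cases j <;> fin_cases k <;> simp_all

lemma chain4_elim {a b c e : X} (h : C.Chain ![a,b,c,e])
    (h1 : a ≠ b) (h2 : a ≠ c) (h3 : a ≠ e) (h4 : b ≠ c) (h5 : b ≠ e) (h6 : c ≠ e) :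
    C.btw a b c ∧ C.btw a b e ∧ C.btw a c e ∧ C.btw b c e := by
  refine ⟨h.2 0 1 2 (by decide) (by decide) h1 h4 h2,
          h.2 0 1 3 (by decide) (by decide) h1 h5 h3,
          h.2 0 2 3 (by decide) (by decide) h2 h6 h3,
          h.2 1 2 3 (by decide) (by decide) h4 h6 h5⟩

lemma chain4_rot {a b c e : X} (h : C.Chain ![a,b,c,e])
    (h1 : a ≠ b) (h2 : a ≠ c) (h3 : a ≠ e) (h4 : b ≠ c) (h5 : b ≠ e) (h6 : c ≠ e) :
    C.Chain ![b,c,e,a] := by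
  obtain ⟨k1, k2, k3, k4⟩ := chain4_elim C h h1 h2 h3 h4 h5 h6
  exact chain4_of C k4 (C.cyclic k1) (C.cyclic k2) (C.cyclic k3)

lemma pw4 {a b c e : X} (h1 : a ≠ b) (h2 : a ≠ c) (h3 : a ≠ e)
    (h4 : b ≠ c) (h5 : b ≠ e) (h6 : c ≠ e) :
    List.Pairwise (· ≠ ·) [a, b, c, e] := by
  simp only [List.pairwise_cons, List.mem_cons, List.not_mem_nil]
  refine ⟨?_, ?_, ?_, ?_, List.Pairwise.nil⟩
  · rintro z (rfl|rfl|rfl|h) <;> first | assumption | exact h.elim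
  · rintro z (rfl|rfl|h) <;> first | assumption | exact h.elim
  · rintro z (rfl|h) <;> first | assumption | exact h.elim
  · rintro z h; exact h.elim

end Stmt17Aux

namespace Stmt17Aux

variable {X : Type*} (C : CircOrder X)

lemma core1 (d : X → X → ℝ) (hd : Dissim d) (hc : sqcCompat C d)
    {x x' v t : X} (far : ∀ z, d x z ≤ d x x')
    (h1 : x ≠ x') (h2 : x ≠ v) (h3 : x ≠ t) (h4 : x' ≠ v) (h5 : x' ≠ t) (h6 : v ≠ t)
    (hch : C.Chain ![x, x', v, t])
    (ht : d t x' < d t x) (hv : d v x ≤ d v x') : False := by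
  obtain ⟨sym, -, -⟩ := hd
  have c1 := chain4_rot C hch h1 h2 h3 h4 h5 h6
  have c2 := chain4_rot C c1 h4 h5 h1.symm h6 h2.symm h3.symm
  have c3 := chain4_rot C c2 h6 h2.symm h4.symm h3.symm h5.symm h1
  have i1 := hc t x x' v (pw4 h3.symm h5.symm h6.symm h1 h2 h4) c3
  have i2 := hc v t x x' (pw4 h6 h2.symm h4.symm h3.symm h5.symm h1) c2
  rcases min_lt_iff.1 i1 with h | h <;> rcases min_lt_iff.1 i2 with h' | h' <;>
    linarith [sym t x, sym v x, sym x' x, far t, far v]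

lemma core2 (d : X → X → ℝ) (hd : Dissim d) (hc : sqcCompat C d)
    {x s v x' : X} (far : ∀ z, d x z ≤ d x x')
    (h1 : x ≠ s) (h2 : x ≠ v) (h3 : x ≠ x') (h4 : s ≠ v) (h5 : s ≠ x') (h6 : v ≠ x')
    (hch : C.Chain ![x, s, v, x'])
    (hs : d s x' < d s x) (hv : d v x ≤ d v x') : False := by
  obtain ⟨sym, -, -⟩ := hd
  have c1 := chain4_rot C hch h1 h2 h3 h4 h5 h6
  have c2 := chain4_rot C c1 h4 h5 h1.symm h6 h2.symm h3.symm
  have i1 := hc s v x' x (pw4 h4 h5 h1.symm h6 h2.symm h3.symm) c1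
  have i2 := hc v x' x s (pw4 h6 h2.symm h4.symm h3.symm h5.symm h1) c2
  rcases min_lt_iff.1 i1 with h | h <;> rcases min_lt_iff.1 i2 with h' | h' <;>
    linarith [sym s x, sym v x, sym x' x, far s, far v]

lemma core3 (d : X → X → ℝ) (hd : Dissim d) (hc : sqcCompat C d)
    {x x' v t : X} (far : ∀ z, d x z ≤ d x x')
    (h1 : x' ≠ x) (h2 : x' ≠ v) (h3 : x' ≠ t) (h4 : x ≠ v) (h5 : x ≠ t) (h6 : v ≠ t)
    (hch : C.Chain ![x', x, v, t])
    (ht : d t x < d t x') (hv : d v x' ≤ d v x) : False := by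
  obtain ⟨sym, -, -⟩ := hd
  have c1 := chain4_rot C hch h1 h2 h3 h4 h5 h6
  have c2 := chain4_rot C c1 h4 h5 h1.symm h6 h2.symm h3.symm
  have c3 := chain4_rot C c2 h6 h2.symm h4.symm h3.symm h5.symm h1
  have i1 := hc v t x' x (pw4 h6 h2.symm h4.symm h3.symm h5.symm h1) c2
  have i2 := hc t x' x v (pw4 h3.symm h5.symm h6.symm h1 h2 h4) c3
  rcases min_lt_iff.1 i1 with h | h <;> rcases min_lt_iff.1 i2 with h' | h' <;>
    linarith [sym t x, sym v x, sym x' x, far t, far v]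

lemma core4 (d : X → X → ℝ) (hd : Dissim d) (hc : sqcCompat C d)
    {x' s v x : X} (far : ∀ z, d x z ≤ d x x')
    (h1 : x' ≠ s) (h2 : x' ≠ v) (h3 : x' ≠ x) (h4 : s ≠ v) (h5 : s ≠ x) (h6 : v ≠ x)
    (hch : C.Chain ![x', s, v, x])
    (hs : d s x < d s x') (hv : d v x' ≤ d v x) : False := by
  obtain ⟨sym, -, -⟩ := hd
  have c1 := chain4_rot C hch h1 h2 h3 h4 h5 h6
  have c2 := chain4_rot C c1 h4 h5 h1.symm h6 h2.symm h3.symm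
  have i1 := hc s v x x' (pw4 h4 h5 h1.symm h6 h2.symm h3.symm) c1
  have i2 := hc v x x' s (pw4 h6 h2.symm h4.symm h3.symm h5.symm h1) c2
  rcases min_lt_iff.1 i1 with h | h <;> rcases min_lt_iff.1 i2 with h' | h' <;>
    linarith [sym s x, sym v x, sym x' x, far s, far v]

lemma side_chains {u s v t p q : X}
    (hch : C.Chain ![u, s, v, t])
    (hus : u ≠ s) (huv : u ≠ v) (hut : u ≠ t) (hsv : s ≠ v) (hst : s ≠ t) (hvt : v ≠ t)
    (hp : p = u ∨ C.btw t p s) (hps : p ≠ s) (hpt : p ≠ t)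
    (hpq : p ≠ q) (hqv : q ≠ v) :
    p ≠ v ∧ ((q ≠ t ∧ C.Chain ![p, q, v, t]) ∨ (q ≠ s ∧ C.Chain ![p, s, v, q])) := by
  obtain ⟨hh1, hh2, hh3, hh4⟩ := chain4_elim C hch hus huv hut hsv hst hvt
  -- the chain ![p, s, v, t]
  have hpv : p ≠ v := by
    rcases hp with rfl | hB
    · exact huv
    · rintro rfl
      exact C.asymm hh4 hB
  have g1 : C.btw p s v := by
    rcases hp with rfl | hB
    · exact hh1
    · by_contra hcon
      rcases C.total hps hsv hpv with h | h
      · exact hcon h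
      · exact C.asymm (C.btw_trans (C.cyclic h) hh4) hB
  have g3 : C.btw p v t := by
    rcases hp with rfl | hB
    · exact hh3
    · exact C.cyclic (C.btw_trans hB (cyc2 C hh4))
  constructor
  · exact hpv
  rcases C.total hpq hqv hpv with hA | hA
  · -- q on the s-side : chain ![p, q, v, t]
    left
    have hqt : q ≠ t := by
      rintro rfl
      exact C.asymm g3 (C.cyclic hA)
    refine ⟨hqt, chain4_of C hA (C.btw_trans hA g3) g3 ?_⟩
    exact C.cyclic (C.cyclic (C.btw_trans (C.cyclic g3) (cyc2 C hA)))
  · -- q on the t-side : chain ![p, s, v, q]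
    right
    have hqs : q ≠ s := by
      rintro rfl
      exact C.asymm g1 hA
    have m3 : C.btw p v q := cyc2 C hA
    refine ⟨hqs, chain4_of C g1 (C.btw_trans g1 m3) m3 ?_⟩
    exact cyc2 C (C.btw_trans hA (cyc2 C g1))

end Stmt17Aux


open Stmt17Aux in
theorem stmt17 {X : Type*} [Fintype X] (d : X → X → ℝ) (hd : Dissim d)
    (C : CircOrder X) (hc : sqcCompat C d) (x x' : X) (hx' : x' ∈ Fset d x) :
    (C.IsArc {u : X | d u x ≤ d u x'} ∨ {u : X | d u x ≤ d u x'} = Set.univ) ∧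
    (C.IsArc {u : X | d u x' ≤ d u x} ∨ {u : X | d u x' ≤ d u x} = Set.univ) := by
  by_cases hxx : x = x'
  · subst hxx
    exact ⟨Or.inr (Set.eq_univ_iff_forall.2 fun u => show d u x ≤ d u x from le_rfl),
           Or.inr (Set.eq_univ_iff_forall.2 fun u => show d u x ≤ d u x from le_rfl)⟩
  replace hxx : x ≠ x' := hxx
  obtain ⟨sym, nonneg, zero_iff⟩ := id hd
  have far : ∀ z, d x z ≤ d x x' := hx'
  have dxx : d x x = 0 := (zero_iff x x).mpr rfl
  have dx'x' : d x' x' = 0 := (zero_iff x' x').mpr rfl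
  constructor
  · -- N is an arc
    by_cases hU : {u : X | d u x ≤ d u x'} = Set.univ
    · exact Or.inr hU
    refine Or.inl ⟨⟨x, by simp only [Set.mem_setOf_eq, dxx]; exact nonneg x x'⟩, hU, ?_⟩
    rintro ⟨u, v, s, t, hu, hv, hs, ht, huv, hst, hch⟩
    simp only [Set.mem_setOf_eq] at hu hv hs ht
    push_neg at hs ht
    have hus : u ≠ s := by rintro rfl; linarith
    have hut : u ≠ t := by rintro rfl; linarith
    have hsv : s ≠ v := by rintro rfl; linarith
    have hvt : v ≠ t := by rintro rfl; linarith
    have hxs : x ≠ s := by rintro rfl; linarith [nonneg x x']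
    have hxt : x ≠ t := by rintro rfl; linarith [nonneg x x']
    have hx'u : x' ≠ u := by
      rintro rfl
      exact hxx ((zero_iff x' x).mp (le_antisymm (by linarith) (nonneg x' x))).symm
    have hx'v : x' ≠ v := by
      rintro rfl
      exact hxx ((zero_iff x' x).mp (le_antisymm (by linarith) (nonneg x' x))).symm
    have hside : (x = u ∨ C.btw t x s) ∨ (x = v ∨ C.btw s x t) := by
      by_cases h1 : x = u
      · exact Or.inl (Or.inl h1)
      by_cases h2 : x = v
      · exact Or.inr (Or.inl h2)
      rcases C.total hxs.symm hxt hst with h | h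
      · exact Or.inr (Or.inr h)
      · exact Or.inl (Or.inr h)
    rcases hside with hp | hp
    · obtain ⟨hpv, hcase⟩ :=
        side_chains C hch hus huv hut hsv hst hvt hp hxs hxt hxx hx'v
      rcases hcase with ⟨hqt, hch'⟩ | ⟨hqs, hch'⟩
      · exact core1 C d hd hc far hxx hpv hxt hx'v hqt hvt hch' ht hv
      · exact core2 C d hd hc far hxs hpv hxx hsv hqs.symm hx'v.symm hch' hs hv
    · have r1 := chain4_rot C hch hus huv hut hsv hst hvt
      have r2 := chain4_rot C r1 hsv hst hus.symm hvt huv.symm hut.symm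
      obtain ⟨hpv, hcase⟩ :=
        side_chains C r2 hvt huv.symm hsv.symm hut.symm hst.symm hus hp hxt hxs hxx hx'u
      rcases hcase with ⟨hqt, hch'⟩ | ⟨hqs, hch'⟩
      · exact core1 C d hd hc far hxx hpv hxs hx'u hqt hus hch' hs hu
      · exact core2 C d hd hc far hxt hpv hxx hut.symm hqs.symm hx'u.symm hch' ht hu
  · -- F is an arc
    by_cases hU : {u : X | d u x' ≤ d u x} = Set.univ
    · exact Or.inr hU
    refine Or.inl ⟨⟨x', by simp only [Set.mem_setOf_eq, dx'x']; exact nonneg x' x⟩, hU, ?_⟩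
    rintro ⟨u, v, s, t, hu, hv, hs, ht, huv, hst, hch⟩
    simp only [Set.mem_setOf_eq] at hu hv hs ht
    push_neg at hs ht
    have hus : u ≠ s := by rintro rfl; linarith
    have hut : u ≠ t := by rintro rfl; linarith
    have hsv : s ≠ v := by rintro rfl; linarith
    have hvt : v ≠ t := by rintro rfl; linarith
    have hx's : x' ≠ s := by rintro rfl; linarith [nonneg x' x]
    have hx't : x' ≠ t := by rintro rfl; linarith [nonneg x' x]
    have hxu : x ≠ u := by
      rintro rfl
      exact hxx ((zero_iff x x').mp (le_antisymm (by linarith) (nonneg x x')))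
    have hxv : x ≠ v := by
      rintro rfl
      exact hxx ((zero_iff x x').mp (le_antisymm (by linarith) (nonneg x x')))
    have hside : (x' = u ∨ C.btw t x' s) ∨ (x' = v ∨ C.btw s x' t) := by
      by_cases h1 : x' = u
      · exact Or.inl (Or.inl h1)
      by_cases h2 : x' = v
      · exact Or.inr (Or.inl h2)
      rcases C.total hx's.symm hx't hst with h | h
      · exact Or.inr (Or.inr h)
      · exact Or.inl (Or.inr h)
    rcases hside with hp | hp
    · obtain ⟨hpv, hcase⟩ :=
        side_chains C hch hus huv hut hsv hst hvt hp hx's hx't hxx.symm hxv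
      rcases hcase with ⟨hqt, hch'⟩ | ⟨hqs, hch'⟩
      · exact core3 C d hd hc far hxx.symm hpv hx't hxv hqt hvt hch' ht hv
      · exact core4 C d hd hc far hx's hpv hxx.symm hsv hqs.symm hxv.symm hch' hs hv
    · have r1 := chain4_rot C hch hus huv hut hsv hst hvt
      have r2 := chain4_rot C r1 hsv hst hus.symm hvt huv.symm hut.symm
      obtain ⟨hpv, hcase⟩ :=
        side_chains C r2 hvt huv.symm hsv.symm hut.symm hst.symm hus hp hx't hx's hxx.symm hxu
      rcases hcase with ⟨hqt, hch'⟩ | ⟨hqs, hch'⟩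
      · exact core3 C d hd hc far hxx.symm hpv hx's hxu hqt hus hch' hs hu
      · exact core4 C d hd hc far hx't hpv hxx.symm hut.symm hqs.symm hxu.symm hch' ht hu
end

section
/- A strictly circular Robinson space (X,d) has exactly one compatible circular order up to reversal: if β and β' are both compatible circular orders for (X,d), then β' = β or β' = β^op. -/
section Aux

lemma arith18 (dxy dxz dxt dyz dyt dzt : ℝ)
    (h1 : min (max dxy dyz) (max dxt dzt) < dxz)
    (h2 : min (max dyz dzt) (max dxy dxt) < dyt)
    (h3 : min (max dxz dyz) (max dxt dyt) < dxy)
    (h4 : min (max dyz dyt) (max dxz dxt) < dzt) : False := by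
  simp only [min_lt_iff, max_lt_iff] at h1 h2 h3 h4
  rcases h1 with ⟨a1, a2⟩ | ⟨a1, a2⟩ <;> rcases h2 with ⟨b1, b2⟩ | ⟨b1, b2⟩ <;>
    rcases h3 with ⟨c1, c2⟩ | ⟨c1, c2⟩ <;> rcases h4 with ⟨e1, e2⟩ | ⟨e1, e2⟩ <;> linarith

variable {X : Type*} (C : CircOrder X)

lemma CircOrder.btw_trans'18 {p q r s : X} (h1 : C.btw p q r) (h2 : C.btw p r s) :
    C.btw q r s := by
  have h3 : C.btw r p q := C.cyclic (C.cyclic h1)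
  have h4 : C.btw r s p := C.cyclic h2
  exact C.cyclic (C.cyclic (C.btw_trans h4 h3))

lemma chain4_of18 {a b c e : X} (h1 : C.btw a b c) (h2 : C.btw a b e) (h3 : C.btw a c e)
    (h4 : C.btw b c e) : C.Chain ![a, b, c, e] := by
  obtain ⟨hab, hbc, hac⟩ := C.distinct h1
  refine ⟨⟨0, 1, 2, by simpa using hab, by simpa using hbc, by simpa using hac⟩, ?_⟩
  intro i j k hij hjk _ _ _
  fin_cases i <;> fin_cases j <;> fin_cases k <;>
    simp_all [Matrix.cons_val_zero, Matrix.cons_val_one, Matrix.head_cons]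

lemma chain4_elim18 {a b c e : X} (h : C.Chain ![a, b, c, e])
    (hab : a ≠ b) (hac : a ≠ c) (hae : a ≠ e) (hbc : b ≠ c) (hbe : b ≠ e) (hce : c ≠ e) :
    C.btw a b c ∧ C.btw a b e ∧ C.btw a c e ∧ C.btw b c e := by
  refine ⟨?_, ?_, ?_, ?_⟩
  · simpa using h.2 0 1 2 (by decide) (by decide) (by simpa using hab) (by simpa using hbc)
      (by simpa using hac)
  · simpa using h.2 0 1 3 (by decide) (by decide) (by simpa using hab) (by simpa using hbe)
      (by simpa using hae)
  · simpa using h.2 0 2 3 (by decide) (by decide) (by simpa using hac) (by simpa using hce)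
      (by simpa using hae)
  · simpa using h.2 1 2 3 (by decide) (by decide) (by simpa using hbc) (by simpa using hce)
      (by simpa using hbe)

lemma chain4_rot18 {a b c e : X} (h : C.Chain ![a, b, c, e])
    (hab : a ≠ b) (hac : a ≠ c) (hae : a ≠ e) (hbc : b ≠ c) (hbe : b ≠ e) (hce : c ≠ e) :
    C.Chain ![b, c, e, a] := by
  obtain ⟨h1, h2, h3, h4⟩ := chain4_elim18 C h hab hac hae hbc hbe hce
  exact chain4_of18 C h4 (C.cyclic h1) (C.cyclic h2) (C.cyclic h3)

lemma chain4_mk18 {p x y z : X} (h1 : C.btw p x y) (h2 : C.btw p y z) :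
    C.Chain ![p, x, y, z] :=
  chain4_of18 C h1 (C.btw_trans h1 h2) h2 (CircOrder.btw_trans'18 C h1 h2)

lemma sort418 {p a b c : X} (hpa : p ≠ a) (hpb : p ≠ b) (hpc : p ≠ c)
    (hab : a ≠ b) (hac : a ≠ c) (hbc : b ≠ c) :
    C.Chain ![p, a, b, c] ∨ C.Chain ![p, a, c, b] ∨ C.Chain ![p, b, a, c] ∨
    C.Chain ![p, b, c, a] ∨ C.Chain ![p, c, a, b] ∨ C.Chain ![p, c, b, a] := by
  have flip : ∀ u v : X, C.btw u v p → C.btw p u v := fun u v h => C.cyclic (C.cyclic h)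
  have asym : ∀ u v : X, C.btw p u v → ¬ C.btw p v u := by
    intro u v h h'
    exact C.asymm h (C.cyclic h')
  rcases C.total hpa hab hpb with h1 | h1 <;> rcases C.total hpa hac hpc with h2 | h2 <;>
    rcases C.total hpb hbc hpc with h3 | h3
  · exact Or.inl (chain4_mk18 C h1 h3)
  · exact Or.inr (Or.inl (chain4_mk18 C h2 (flip _ _ h3)))
  · exact absurd (C.btw_trans (flip _ _ h2) h1) (asym _ _ h3)
  · exact Or.inr (Or.inr (Or.inr (Or.inr (Or.inl (chain4_mk18 C (flip _ _ h2) h1)))))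
  · exact Or.inr (Or.inr (Or.inl (chain4_mk18 C (flip _ _ h1) h2)))
  · exact absurd (flip _ _ h1) (asym _ _ (C.btw_trans h2 (flip _ _ h3)))
  · exact Or.inr (Or.inr (Or.inr (Or.inl (chain4_mk18 C h3 (flip _ _ h2)))))
  · exact Or.inr (Or.inr (Or.inr (Or.inr (Or.inr (chain4_mk18 C (flip _ _ h3) (flip _ _ h1))))))

lemma mk_pw18 {a b c e : X} (h1 : a ≠ b) (h2 : a ≠ c) (h3 : a ≠ e) (h4 : b ≠ c)
    (h5 : b ≠ e) (h6 : c ≠ e) : List.Pairwise (· ≠ ·) [a, b, c, e] := by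
  simp_all [List.pairwise_cons]

/-- the core 4-point incompatibility -/
lemma quad_core18 {d : X → X → ℝ} (hd : Dissim d) {C C' : CircOrder X}
    (h1 : spreCompat C d) (h2 : spreCompat C' d) {x y z t : X}
    (hxy : x ≠ y) (hxz : x ≠ z) (hxt : x ≠ t) (hyz : y ≠ z) (hyt : y ≠ t) (hzt : z ≠ t)
    (hC : C.Chain ![x, y, z, t]) (hC' : C'.Chain ![x, z, y, t]) : False := by
  have A1 := h1 x y z t (mk_pw18 hxy hxz hxt hyz hyt hzt) hC
  have A2 := h1 y z t x (mk_pw18 hyz hyt hxy.symm hzt hxz.symm hxt.symm)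
    (chain4_rot18 C hC hxy hxz hxt hyz hyt hzt)
  have A3 := h2 x z y t (mk_pw18 hxz hxy hxt hyz.symm hzt hyt) hC'
  have A4 := h2 z y t x (mk_pw18 hyz.symm hzt hxz.symm hyt hxy.symm hxt.symm)
    (chain4_rot18 C' hC' hxz hxy hxt hyz.symm hzt hyt)
  rw [hd.1 t z] at A1
  rw [hd.1 y x] at A2
  rw [hd.1 z y, hd.1 t y] at A3
  rw [hd.1 z y, hd.1 z x] at A4
  exact arith18 (d x y) (d x z) (d x t) (d y z) (d y t) (d z t) A1 A2 A3 A4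

/-- two strictly compatible circular orders induce the same or reversed chain on 4 points -/
lemma quad18 {d : X → X → ℝ} (hd : Dissim d) {C C' : CircOrder X}
    (h1 : spreCompat C d) (h2 : spreCompat C' d) {p q r s : X}
    (hpq : p ≠ q) (hpr : p ≠ r) (hps : p ≠ s) (hqr : q ≠ r) (hqs : q ≠ s) (hrs : r ≠ s)
    (hC : C.Chain ![p, q, r, s]) : C'.Chain ![p, q, r, s] ∨ C'.Chain ![p, s, r, q] := by
  rcases sort418 C' hpq hpr hps hqr hqs hrs with h | h | h | h | h | h
  · exact Or.inl h
  · -- C'.Chain ![p,q,s,r] : use (x,y,z,t) = (q,r,s,p)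
    exact absurd (quad_core18 hd h1 h2 hqr hqs hpq.symm hrs hpr.symm hps.symm
      (chain4_rot18 C hC hpq hpr hps hqr hqs hrs)
      (chain4_rot18 C' h hpq hps hpr hqs hqr hrs.symm)) not_false
  · -- C'.Chain ![p,r,q,s] : (x,y,z,t) = (p,q,r,s)
    exact absurd (quad_core18 hd h1 h2 hpq hpr hps hqr hqs hrs hC h) not_false
  · -- C'.Chain ![p,r,s,q] : (x,y,z,t) = (s,p,q,r), C'.Chain ![s,q,p,r] = rot^2
    have hCrot := chain4_rot18 C (chain4_rot18 C (chain4_rot18 C hC hpq hpr hps hqr hqs hrs)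
      hqr hqs hpq.symm hrs hpr.symm hps.symm) hrs hpr.symm hqr.symm hps.symm hqs.symm hpq
    have hC'rot := chain4_rot18 C' (chain4_rot18 C' h hpr hps hpq hrs hqr.symm hqs.symm)
      hrs hqr.symm hpr.symm hqs.symm hps.symm hpq.symm
    exact absurd (quad_core18 hd h1 h2 hps.symm hqs.symm hrs.symm hpq hpr hqr
      hCrot hC'rot) not_false
  · -- C'.Chain ![p,s,q,r] : (x,y,z,t) = (r,s,p,q), C'.Chain ![r,p,s,q] = rot^3
    have hCrot := chain4_rot18 C (chain4_rot18 C hC hpq hpr hps hqr hqs hrs)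
      hqr hqs hpq.symm hrs hpr.symm hps.symm
    have r1 := chain4_rot18 C' h hps hpq hpr hqs.symm hrs.symm hqr
    have r2 := chain4_rot18 C' r1 hqs.symm hrs.symm hps.symm hqr hpq.symm hpr.symm
    have r3 := chain4_rot18 C' r2 hqr hpq.symm hqs hpr.symm hrs hps
    exact absurd (quad_core18 hd h1 h2 hrs hpr.symm hqr.symm hps.symm hqs.symm hpq
      hCrot r3) not_false
  · exact Or.inr h

end Aux

section Pos

variable {X : Type*}

/-- `C'` agrees with `C` on the ordered triple `(u,v,w)`. -/
def Pos18 (C C' : CircOrder X) (u v w : X) : Prop := C'.btw u v w ↔ C.btw u v w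

variable {C C' : CircOrder X}

lemma btw_cyc_iff18 (C : CircOrder X) (u v w : X) : C.btw u v w ↔ C.btw v w u :=
  ⟨C.cyclic, fun h => C.cyclic (C.cyclic h)⟩

lemma btw_rev_iff18 (C : CircOrder X) {u v w : X} (huv : u ≠ v) (hvw : v ≠ w) (huw : u ≠ w) :
    C.btw w v u ↔ ¬ C.btw u v w :=
  ⟨fun h h' => C.asymm h' h, fun h => (C.total huv hvw huw).resolve_left h⟩

lemma pos_cyc_iff18 (u v w : X) : Pos18 C C' u v w ↔ Pos18 C C' v w u := by
  unfold Pos18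
  rw [btw_cyc_iff18 C u v w, btw_cyc_iff18 C' u v w]

lemma pos_rev_iff18 {u v w : X} (huv : u ≠ v) (hvw : v ≠ w) (huw : u ≠ w) :
    Pos18 C C' u v w ↔ Pos18 C C' w v u := by
  unfold Pos18
  rw [btw_rev_iff18 C huv hvw huw, btw_rev_iff18 C' huv hvw huw, not_iff_not]

lemma pos_swap12_iff18 {u v w : X} (huv : u ≠ v) (hvw : v ≠ w) (huw : u ≠ w) :
    Pos18 C C' u v w ↔ Pos18 C C' u w v :=
  ((pos_cyc_iff18 u w v).trans (pos_rev_iff18 hvw.symm huv.symm huw.symm)).symm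

lemma pos_swap01_iff18 {u v w : X} (huv : u ≠ v) (hvw : v ≠ w) (huw : u ≠ w) :
    Pos18 C C' u v w ↔ Pos18 C C' v u w :=
  ((pos_cyc_iff18 v u w).trans (pos_swap12_iff18 huv hvw huw).symm).symm

end Pos

section Main

variable {X : Type*} {d : X → X → ℝ} {C C' : CircOrder X}

lemma quad_pos18 (hd : Dissim d) (h1 : spreCompat C d) (h2 : spreCompat C' d) {p q r s : X}
    (hpq : p ≠ q) (hpr : p ≠ r) (hps : p ≠ s) (hqr : q ≠ r) (hqs : q ≠ s) (hrs : r ≠ s)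
    (hC : C.Chain ![p, q, r, s]) :
    (Pos18 C C' p q r ∧ Pos18 C C' p q s ∧ Pos18 C C' p r s) ∨
    (¬Pos18 C C' p q r ∧ ¬Pos18 C C' p q s ∧ ¬Pos18 C C' p r s) := by
  obtain ⟨b1, b2, b3, _⟩ := chain4_elim18 C hC hpq hpr hps hqr hqs hrs
  rcases quad18 hd h1 h2 hpq hpr hps hqr hqs hrs hC with h | h
  · obtain ⟨c1, c2, c3, _⟩ := chain4_elim18 C' h hpq hpr hps hqr hqs hrs
    exact Or.inl ⟨iff_of_true c1 b1, iff_of_true c2 b2, iff_of_true c3 b3⟩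
  · obtain ⟨c1, c2, c3, _⟩ := chain4_elim18 C' h hps hpr hpq hrs.symm hqs.symm hqr.symm
    refine Or.inr ⟨?_, ?_, ?_⟩
    · exact fun hP => C'.asymm (hP.mpr b1) (C'.cyclic c3)
    · exact fun hP => C'.asymm (hP.mpr b2) (C'.cyclic c2)
    · exact fun hP => C'.asymm (hP.mpr b3) (C'.cyclic c1)

lemma pos_ext18 (hd : Dissim d) (h1 : spreCompat C d) (h2 : spreCompat C' d) {a b c c' : X}
    (hab : a ≠ b) (hac : a ≠ c) (hbc : b ≠ c) (hac' : a ≠ c') (hbc' : b ≠ c') :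
    Pos18 C C' a b c ↔ Pos18 C C' a b c' := by
  by_cases hcc' : c = c'
  · subst hcc'; exact Iff.rfl
  · have hcc'' : c ≠ c' := hcc'
    rcases sort418 C hab hac hac' hbc hbc' hcc'' with h | h | h | h | h | h
    · rcases quad_pos18 hd h1 h2 hab hac hac' hbc hbc' hcc'' h with ⟨t1, t2, _⟩ | ⟨t1, t2, _⟩
      · exact iff_of_true t1 t2
      · exact iff_of_false t1 t2
    · rcases quad_pos18 hd h1 h2 hab hac' hac hbc' hbc hcc''.symm h with
        ⟨t1, t2, _⟩ | ⟨t1, t2, _⟩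
      · exact iff_of_true t2 t1
      · exact iff_of_false t2 t1
    · rw [pos_swap12_iff18 hab hbc hac]
      rcases quad_pos18 hd h1 h2 hac hab hac' hbc.symm hcc'' hbc' h with
        ⟨t1, _, t3⟩ | ⟨t1, _, t3⟩
      · exact iff_of_true t1 t3
      · exact iff_of_false t1 t3
    · rw [pos_swap12_iff18 hab hbc hac, pos_swap12_iff18 hab hbc' hac']
      rcases quad_pos18 hd h1 h2 hac hac' hab hcc'' hbc.symm hbc'.symm h with
        ⟨_, t2, t3⟩ | ⟨_, t2, t3⟩
      · exact iff_of_true t2 t3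
      · exact iff_of_false t2 t3
    · rw [pos_swap12_iff18 hab hbc' hac']
      rcases quad_pos18 hd h1 h2 hac' hab hac hbc'.symm hcc''.symm hbc h with
        ⟨t1, _, t3⟩ | ⟨t1, _, t3⟩
      · exact iff_of_true t3 t1
      · exact iff_of_false t3 t1
    · rw [pos_swap12_iff18 hab hbc hac, pos_swap12_iff18 hab hbc' hac']
      rcases quad_pos18 hd h1 h2 hac' hac hab hcc''.symm hbc'.symm hbc.symm h with
        ⟨_, t2, t3⟩ | ⟨_, t2, t3⟩
      · exact iff_of_true t3 t2
      · exact iff_of_false t3 t2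

lemma pos_transfer18 (hd : Dissim d) (h1 : spreCompat C d) (h2 : spreCompat C' d)
    {a b c w u v : X} (hab : a ≠ b) (hac : a ≠ c) (hbc : b ≠ c) (haw : a ≠ w) (hbw : b ≠ w)
    (hau : a ≠ u) (hwu : w ≠ u) (hwv : w ≠ v) (huv : u ≠ v) :
    Pos18 C C' a b c → Pos18 C C' w u v := by
  intro hP
  have s1 : Pos18 C C' a b w := (pos_ext18 hd h1 h2 hab hac hbc haw hbw).mp hP
  have s2 : Pos18 C C' w a b := ((pos_cyc_iff18 a b w).trans (pos_cyc_iff18 b w a)).mp s1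
  have s3 : Pos18 C C' w a u := (pos_ext18 hd h1 h2 haw.symm hbw.symm hab hwu hau).mp s2
  have s4 : Pos18 C C' u w a := ((pos_cyc_iff18 w a u).trans (pos_cyc_iff18 a u w)).mp s3
  have s5 : Pos18 C C' u w v :=
    (pos_ext18 hd h1 h2 hwu.symm hau.symm haw.symm huv hwv).mp s4
  exact (pos_swap01_iff18 hwu.symm hwv huv).mp s5

lemma pos_const18 (hd : Dissim d) (h1 : spreCompat C d) (h2 : spreCompat C' d)
    {a b c x y z : X} (hab : a ≠ b) (hac : a ≠ c) (hbc : b ≠ c)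
    (hxy : x ≠ y) (hxz : x ≠ z) (hyz : y ≠ z) :
    Pos18 C C' a b c → Pos18 C C' x y z := by
  intro hP
  by_cases hx : x ≠ a ∧ x ≠ b
  · by_cases hy2 : y ≠ a
    · exact pos_transfer18 hd h1 h2 hab hac hbc hx.1.symm hx.2.symm hy2.symm hxy hxz hyz hP
    · rw [not_ne_iff] at hy2
      have hza : a ≠ z := hy2 ▸ hyz
      have := pos_transfer18 hd h1 h2 hab hac hbc hx.1.symm hx.2.symm hza hxz hxy
        hyz.symm hP
      exact (pos_swap12_iff18 hxy hyz hxz).mpr this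
  · by_cases hy : y ≠ a ∧ y ≠ b
    · by_cases hx2 : x ≠ a
      · have := pos_transfer18 hd h1 h2 hab hac hbc hy.1.symm hy.2.symm hx2.symm hxy.symm
          hyz hxz hP
        exact (pos_swap01_iff18 hxy hyz hxz).mpr this
      · rw [not_ne_iff] at hx2
        have hza : a ≠ z := hx2 ▸ hxz
        have := pos_transfer18 hd h1 h2 hab hac hbc hy.1.symm hy.2.symm hza hyz hxy.symm
          hxz.symm hP
        exact (pos_cyc_iff18 x y z).mpr this
    · have hz : a ≠ z ∧ b ≠ z := by
        rcases not_and_or.mp hx with h | h <;> rcases not_and_or.mp hy with h' | h' <;>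
          rw [not_not] at h h'
        · exact absurd (h ▸ h' ▸ rfl : x = y) hxy
        · exact ⟨h ▸ hxz, h' ▸ hyz⟩
        · exact ⟨h' ▸ hyz, h ▸ hxz⟩
        · exact absurd (h ▸ h' ▸ rfl : x = y) hxy
      by_cases hx2 : x ≠ a
      · have := pos_transfer18 hd h1 h2 hab hac hbc hz.1 hz.2 hx2.symm hxz.symm hyz.symm
          hxy hP
        exact (pos_cyc_iff18 z x y).mp this
      · rw [not_ne_iff] at hx2
        have hay : a ≠ y := hx2 ▸ hxy
        have := pos_transfer18 hd h1 h2 hab hac hbc hz.1 hz.2 hay hyz.symm hxz.symm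
          hxy.symm hP
        exact (pos_rev_iff18 hxy hyz hxz).mpr this

end Main

theorem stmt18 {X : Type*} [Fintype X] (d : X → X → ℝ) (hd : Dissim d)
    (C C' : CircOrder X) (h1 : spreCompat C d) (h2 : spreCompat C' d) :
    (∀ u v w : X, C'.btw u v w ↔ C.btw u v w) ∨
    (∀ u v w : X, C'.btw u v w ↔ C.btw w v u) := by
  by_cases hex : ∃ a b c : X, a ≠ b ∧ a ≠ c ∧ b ≠ c
  · obtain ⟨a, b, c, hab, hac, hbc⟩ := hex
    by_cases hP : Pos18 C C' a b c
    · left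
      intro u v w
      by_cases hdist : u ≠ v ∧ v ≠ w ∧ u ≠ w
      · exact pos_const18 hd h1 h2 hab hac hbc hdist.1 hdist.2.2 hdist.2.1 hP
      · exact iff_of_false (fun h => hdist (C'.distinct h)) (fun h => hdist (C.distinct h))
    · right
      intro u v w
      by_cases hdist : u ≠ v ∧ v ≠ w ∧ u ≠ w
      · have hnP : ¬ Pos18 C C' u v w := fun h =>
          hP (pos_const18 hd h1 h2 hdist.1 hdist.2.2 hdist.2.1 hab hac hbc h)
        have key := not_iff.mp hnP
        by_cases hCb : C.btw u v w
        · exact iff_of_false (fun h' => (key.mpr hCb) h') (C.asymm hCb)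
        · refine iff_of_true ?_ ((C.total hdist.1 hdist.2.1 hdist.2.2).resolve_left hCb)
          by_contra h'
          exact hCb (key.mp h')
      · refine iff_of_false (fun h => hdist (C'.distinct h)) (fun h => hdist ?_)
        obtain ⟨h1', h2', h3'⟩ := C.distinct h
        exact ⟨h2'.symm, h1'.symm, h3'.symm⟩
  · left
    intro u v w
    refine iff_of_false (fun h => hex ?_) (fun h => hex ?_)
    · obtain ⟨h1', h2', h3'⟩ := C'.distinct h
      exact ⟨u, v, w, h1', h3', h2'⟩
    · obtain ⟨h1', h2', h3'⟩ := C.distinct h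
      exact ⟨u, v, w, h1', h3', h2'⟩
end

section
/- A strict quasi-circular Robinson space (X,d) admits two compatible circular orders that are not reverses of each other if and only if there is a partition X = N ∪ F with |N| > 1, |F| > 1, and a threshold δ ≥ 0 such that for all u, v ∈ X: d(u,v) > δ if and only if exactly one of u, v belongs to N. -/
namespace Stmt19

variable {X : Type*}

lemma btw_cyc2 (C : CircOrder X) {u v w : X} (h : C.btw u v w) : C.btw w u v :=
  C.cyclic (C.cyclic h)

lemma not_btw_iff (C : CircOrder X) {u v w : X} (h1 : u ≠ v) (h2 : v ≠ w) (h3 : u ≠ w) :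
    ¬ C.btw u v w ↔ C.btw w v u := by
  constructor
  · intro h
    rcases C.total h1 h2 h3 with h' | h'
    · exact absurd h' h
    · exact h'
  · intro h h'
    exact C.asymm h' h

lemma btw_step (C : CircOrder X) {x y z t : X} (h1 : C.btw x y z) (h2 : C.btw x z t) :
    C.btw y z t := by
  have a1 : C.btw z t x := C.cyclic h2
  have a2 : C.btw z x y := btw_cyc2 C h1
  have a3 : C.btw z t y := C.btw_trans a1 a2
  exact btw_cyc2 C a3

lemma chain4_iff (C : CircOrder X) {a b c d : X} (hab : a ≠ b) (hac : a ≠ c) (had : a ≠ d)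
    (hbc : b ≠ c) (hbd : b ≠ d) (hcd : c ≠ d) :
    C.Chain ![a,b,c,d] ↔ (C.btw a b c ∧ C.btw a b d ∧ C.btw a c d ∧ C.btw b c d) := by
  constructor
  · rintro ⟨-, h⟩
    exact ⟨h 0 1 2 (by decide) (by decide) hab hbc hac,
           h 0 1 3 (by decide) (by decide) hab hbd had,
           h 0 2 3 (by decide) (by decide) hac hcd had,
           h 1 2 3 (by decide) (by decide) hbc hcd hbd⟩
  · rintro ⟨h1, h2, h3, h4⟩
    refine ⟨⟨0, 1, 2, hab, hbc, hac⟩, ?_⟩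
    intro i j k hij hjk n1 n2 n3
    fin_cases i <;> fin_cases j <;> fin_cases k <;>
      first
        | exact h1 | exact h2 | exact h3 | exact h4
        | exact absurd hij (by decide) | exact absurd hjk (by decide)

lemma chain4_intro (C : CircOrder X) {a b c d : X} (hab : a ≠ b) (hac : a ≠ c) (had : a ≠ d)
    (hbc : b ≠ c) (hbd : b ≠ d) (hcd : c ≠ d)
    (h1 : C.btw a b c) (h2 : C.btw a c d) : C.Chain ![a,b,c,d] :=
  (chain4_iff C hab hac had hbc hbd hcd).mpr
    ⟨h1, C.btw_trans h1 h2, h2, btw_step C h1 h2⟩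

lemma chain4_rot (C : CircOrder X) {a b c d : X} (hab : a ≠ b) (hac : a ≠ c) (had : a ≠ d)
    (hbc : b ≠ c) (hbd : b ≠ d) (hcd : c ≠ d)
    (h : C.Chain ![a,b,c,d]) : C.Chain ![b,c,d,a] := by
  rcases (chain4_iff C hab hac had hbc hbd hcd).mp h with ⟨h1, h2, h3, h4⟩
  exact (chain4_iff C hbc hbd hab.symm hcd hac.symm had.symm).mpr
    ⟨h4, C.cyclic h1, C.cyclic h2, C.cyclic h3⟩

lemma cases6 (C : CircOrder X) {a b c d : X} (hab : a ≠ b) (hac : a ≠ c) (had : a ≠ d)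
    (hbc : b ≠ c) (hbd : b ≠ d) (hcd : c ≠ d) :
    C.Chain ![a,b,c,d] ∨ C.Chain ![a,b,d,c] ∨ C.Chain ![a,c,b,d] ∨
    C.Chain ![a,c,d,b] ∨ C.Chain ![a,d,b,c] ∨ C.Chain ![a,d,c,b] := by
  rcases C.total hab hbc hac with t1 | t1 <;>
  rcases C.total hab hbd had with t2 | t2 <;>
  rcases C.total hac hcd had with t3 | t3
  · exact Or.inl (chain4_intro C hab hac had hbc hbd hcd t1 t3)
  · exact Or.inr (Or.inl (chain4_intro C hab had hac hbd hbc hcd.symm t2 (btw_cyc2 C t3)))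
  · have hadb : C.btw a d b := btw_cyc2 C t2
    have h' : C.btw a d c := C.btw_trans hadb t1
    exact absurd (C.cyclic t3) (C.asymm h')
  · exact Or.inr (Or.inr (Or.inr (Or.inr (Or.inl
      (chain4_intro C had hab hac hbd.symm hcd.symm hbc (btw_cyc2 C t2) t1)))))
  · exact Or.inr (Or.inr (Or.inl
      (chain4_intro C hac hab had hbc.symm hcd hbd (btw_cyc2 C t1) t2)))
  · have h' : C.btw a d b := C.btw_trans (btw_cyc2 C t3) (btw_cyc2 C t1)
    exact absurd (C.cyclic t2) (C.asymm h')
  · exact Or.inr (Or.inr (Or.inr (Or.inl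
      (chain4_intro C hac had hab hcd hbc.symm hbd.symm t3 (btw_cyc2 C t2)))))
  · exact Or.inr (Or.inr (Or.inr (Or.inr (Or.inr
      (chain4_intro C had hac hab hcd.symm hbd.symm hbc.symm (btw_cyc2 C t3) (btw_cyc2 C t1))))))

lemma pw4 {x y z t : X} (h1 : x ≠ y) (h2 : x ≠ z) (h3 : x ≠ t) (h4 : y ≠ z) (h5 : y ≠ t)
    (h6 : z ≠ t) : List.Pairwise (· ≠ ·) [x, y, z, t] := by
  simp only [List.pairwise_cons, List.mem_cons, List.not_mem_nil, List.mem_singleton]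
  refine ⟨?_, ?_, ?_, by simp⟩ <;> intro a ha <;> rcases ha with rfl|rfl|rfl|h <;> simp_all

lemma sqc4 {C : CircOrder X} {d : X → X → ℝ} (h : sqcCompat C d) {x y z t : X}
    (h1 : x ≠ y) (h2 : x ≠ z) (h3 : x ≠ t) (h4 : y ≠ z) (h5 : y ≠ t) (h6 : z ≠ t)
    (hc : C.Chain ![x,y,z,t]) : min (d y z) (d t z) < d x z :=
  h x y z t (pw4 h1 h2 h3 h4 h5 h6) hc

end Stmt19
namespace Stmt19
variable {X : Type*}

lemma btw_rot_iff (C : CircOrder X) {u v w : X} : C.btw u v w ↔ C.btw v w u :=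
  ⟨C.cyclic, btw_cyc2 C⟩

lemma btw_asym' (C : CircOrder X) {u v w : X} (h : C.btw u v w) : ¬ C.btw u w v :=
  fun h' => C.asymm h (C.cyclic h')

lemma btw_flip (C : CircOrder X) {u v w : X} (h1 : u ≠ v) (h2 : v ≠ w) (h3 : u ≠ w)
    (h : ¬ C.btw u v w) : C.btw u w v :=
  btw_cyc2 C ((not_btw_iff C h1 h2 h3).mp h)

lemma pw4_elim {x y z t : X} (h : List.Pairwise (· ≠ ·) [x, y, z, t]) :
    x ≠ y ∧ x ≠ z ∧ x ≠ t ∧ y ≠ z ∧ y ≠ t ∧ z ≠ t := by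
  simp only [List.pairwise_cons, List.mem_cons, List.not_mem_nil, List.mem_singleton] at h
  refine ⟨h.1 y ?_, h.1 z ?_, h.1 t ?_, h.2.1 z ?_, h.2.1 t ?_, h.2.2.1 t ?_⟩ <;> simp

def revO (C : CircOrder X) : CircOrder X where
  btw u v w := C.btw w v u
  distinct h := by
    obtain ⟨h1, h2, h3⟩ := C.distinct h
    exact ⟨h2.symm, h1.symm, h3.symm⟩
  total h1 h2 h3 := (C.total h2.symm h1.symm h3.symm)
  asymm h h' := C.asymm h h'
  cyclic h := btw_cyc2 C h
  btw_trans {u v w x} h1 h2 := by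
    -- h1 : C.btw w v u, h2 : C.btw x w u ⊢ C.btw x v u
    exact C.cyclic (C.btw_trans (btw_cyc2 C h2) (btw_cyc2 C h1))

lemma revO_btw (C : CircOrder X) (u v w : X) : (revO C).btw u v w ↔ C.btw w v u := Iff.rfl

lemma chain_revO (C : CircOrder X) {x y z t : X} (h1 : x ≠ y) (h2 : x ≠ z) (h3 : x ≠ t)
    (h4 : y ≠ z) (h5 : y ≠ t) (h6 : z ≠ t) :
    (revO C).Chain ![x,y,z,t] ↔ C.Chain ![t,z,y,x] := by
  rw [chain4_iff (revO C) h1 h2 h3 h4 h5 h6,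
      chain4_iff C h6.symm h5.symm h3.symm h4.symm h2.symm h1.symm]
  simp only [revO_btw]
  tauto

lemma sqc_revO {C : CircOrder X} {d : X → X → ℝ} (h : sqcCompat C d) :
    sqcCompat (revO C) d := by
  intro x y z t hpw hc
  obtain ⟨n1, n2, n3, n4, n5, n6⟩ := pw4_elim hpw
  have hc' : C.Chain ![t,z,y,x] := (chain_revO C n1 n2 n3 n4 n5 n6).mp hc
  -- rotate (t,z,y,x) → (z,y,x,t) → (y,x,t,z) → (x,t,z,y)
  have r1 := chain4_rot C n6.symm n5.symm n3.symm n4.symm n2.symm n1.symm hc'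
  have r2 := chain4_rot C n4.symm n2.symm n6 n1.symm n5 n3 r1
  have r3 := chain4_rot C n1.symm n5 n4 n3 n2 n6.symm r2
  have := sqc4 h n3 n2 n1 n6.symm n5.symm n4.symm r3
  rwa [min_comm] at this

def epsP (C C' : CircOrder X) (u v w : X) : Prop := C.btw u v w ↔ C'.btw u v w

lemma eps_rot {C C' : CircOrder X} {u v w : X} :
    epsP C C' u v w ↔ epsP C C' v w u :=
  iff_congr (btw_rot_iff C) (btw_rot_iff C')

lemma eps_rev3 {C C' : CircOrder X} {u v w : X} (h1 : u ≠ v) (h2 : v ≠ w) (h3 : u ≠ w) :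
    epsP C C' w v u ↔ epsP C C' u v w := by
  unfold epsP
  rw [← not_btw_iff C h1 h2 h3, ← not_btw_iff C' h1 h2 h3]
  tauto

lemma eps_swap23 {C C' : CircOrder X} {u v w : X} (h1 : u ≠ v) (h2 : v ≠ w) (h3 : u ≠ w) :
    epsP C C' u w v ↔ epsP C C' u v w :=
  (eps_rev3 h2 h3.symm h1.symm).trans eps_rot.symm

lemma eps_swap12 {C C' : CircOrder X} {u v w : X} (h1 : u ≠ v) (h2 : v ≠ w) (h3 : u ≠ w) :
    epsP C C' v u w ↔ epsP C C' u v w :=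
  (eps_rev3 h3.symm h1 h2.symm).trans (eps_rot.trans eps_rot).symm

end Stmt19
namespace Stmt19
variable {X : Type*}

lemma two_of_min {u x y : ℝ} (h1 : min y u < x) (h2 : min x u < y) : u < x ∧ u < y := by
  rcases min_lt_iff.mp h1 with p | p <;> rcases min_lt_iff.mp h2 with q | q <;>
    constructor <;> linarith

/-- Metric consequences of a "mixed" quadruple: `C`-order (a,b,c,e), `C'`-order (a,b,e,c). -/
lemma mix8 {C C' : CircOrder X} {d : X → X → ℝ} (hd : Dissim d)
    (h : sqcCompat C d) (h' : sqcCompat C' d) {a b c e : X}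
    (nab : a ≠ b) (nac : a ≠ c) (nae : a ≠ e) (nbc : b ≠ c) (nbe : b ≠ e) (nce : c ≠ e)
    (hc : C.Chain ![a,b,c,e]) (hc' : C'.Chain ![a,b,e,c]) :
    (d a b < d a c ∧ d a b < d a e ∧ d a b < d b c ∧ d a b < d b e) ∧
    (d c e < d a c ∧ d c e < d a e ∧ d c e < d b c ∧ d c e < d b e) := by
  have sy := hd.1
  -- rotations of the C-chain (a,b,c,e)
  have c2 := chain4_rot C nab nac nae nbc nbe nce hc
  have c3 := chain4_rot C nbc nbe nab.symm nce nac.symm nae.symm c2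
  have c4 := chain4_rot C nce nac.symm nbc.symm nae.symm nbe.symm nab c3
  -- rotations of the C'-chain (a,b,e,c)
  have c2' := chain4_rot C' nab nae nac nbe nbc nce.symm hc'
  have c3' := chain4_rot C' nbe nbc nab.symm nce.symm nae.symm nac.symm c2'
  have c4' := chain4_rot C' nce.symm nae.symm nbe.symm nac.symm nbc.symm nab c3'
  have s1 := sqc4 h nab nac nae nbc nbe nce hc
  have s2 := sqc4 h nbc nbe nab.symm nce nac.symm nae.symm c2
  have s3 := sqc4 h nce nac.symm nbc.symm nae.symm nbe.symm nab c3
  have s4 := sqc4 h nae.symm nbe.symm nce.symm nab nac nbc c4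
  have s5 := sqc4 h' nab nae nac nbe nbc nce.symm hc'
  have s6 := sqc4 h' nbe nbc nab.symm nce.symm nae.symm nac.symm c2'
  have s7 := sqc4 h' nce.symm nae.symm nbe.symm nac.symm nbc.symm nab c3'
  have s8 := sqc4 h' nac.symm nbc.symm nce nab nae nbe c4'
  -- s1 : min (d b c) (d e c) < d a c
  -- s2 : min (d c e) (d a e) < d b e
  -- s3 : min (d e a) (d b a) < d c a
  -- s4 : min (d a b) (d c b) < d e b
  -- s5 : min (d b e) (d c e) < d a e
  -- s6 : min (d e c) (d a c) < d b c
  -- s7 : min (d c a) (d b a) < d e a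
  -- s8 : min (d a b) (d e b) < d c b
  rw [sy e c] at s1 s6
  rw [sy e a, sy b a, sy c a] at s3
  rw [sy c b, sy e b] at s4
  rw [sy c a, sy b a, sy e a] at s7
  rw [sy e b, sy c b] at s8
  have p1 : d a b < d a c ∧ d a b < d a e := two_of_min s3 s7
  have p2 : d a b < d b e ∧ d a b < d b c := by
    rw [min_comm] at s4 s8
    exact two_of_min s4 s8
  have p3 : d c e < d a c ∧ d c e < d b c := by
    rw [min_comm] at s6
    exact two_of_min s1 s6
  have p4 : d c e < d a e ∧ d c e < d b e := by
    rw [min_comm] at s2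
    exact two_of_min s5 s2
  exact ⟨⟨p1.1, p1.2, p2.2, p2.1⟩, ⟨p3.1, p4.1, p3.2, p4.2⟩⟩

/-- The MIX lemma: a quadruple whose `eps`-pattern is (+,+,−) on {a,b,c},{a,b,e},{a,c,e}
is mixed with split pair {a,b} | {c,e}, yielding the metric inequalities. -/
lemma mix {C C' : CircOrder X} {d : X → X → ℝ} (hd : Dissim d)
    (h : sqcCompat C d) (h' : sqcCompat C' d) {a b c e : X}
    (nab : a ≠ b) (nac : a ≠ c) (nae : a ≠ e) (nbc : b ≠ c) (nbe : b ≠ e) (nce : c ≠ e)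
    (e1 : epsP C C' a b c) (e2 : epsP C C' a b e) (e3 : ¬ epsP C C' a c e) :
    ¬ epsP C C' b c e ∧
    (d a b < d a c ∧ d a b < d a e ∧ d a b < d b c ∧ d a b < d b e) ∧
    (d c e < d a c ∧ d c e < d a e ∧ d c e < d b c ∧ d c e < d b e) := by
  rcases cases6 C nab nac nae nbc nbe nce with hC | hC | hC | hC | hC | hC
  · -- C-order (a,b,c,e)
    obtain ⟨b1, b2, b3, b4⟩ := (chain4_iff C nab nac nae nbc nbe nce).mp hC
    have h1' : C'.btw a b c := e1.mp b1
    have h2' : C'.btw a b e := e2.mp b2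
    have h3' : ¬ C'.btw a c e := fun hx => e3 ⟨fun _ => hx, fun _ => b3⟩
    have h3'' : C'.btw a e c := btw_flip C' nac nce nae h3'
    have hc' : C'.Chain ![a,b,e,c] :=
      chain4_intro C' nab nae nac nbe nbc nce.symm h2' h3''
    have hbec : C'.btw b e c := ((chain4_iff C' nab nae nac nbe nbc nce.symm).mp hc').2.2.2
    refine ⟨fun he => btw_asym' C' hbec ?_, mix8 hd h h' nab nac nae nbc nbe nce hC hc'⟩
    exact he.mp b4
  · -- C-order (a,b,e,c)
    obtain ⟨b1, b2, b3, b4⟩ := (chain4_iff C nab nae nac nbe nbc nce.symm).mp hC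
    -- b1 : btw a b e, b2 : btw a b c, b3 : btw a e c, b4 : btw b e c
    have hnc : ¬ C.btw a c e := btw_asym' C b3
    have h3' : C'.btw a c e := by
      by_contra hx
      exact e3 ⟨fun hy => absurd hy hnc, fun hy => absurd hy hx⟩
    have h1' : C'.btw a b c := e1.mp b2
    have hc' : C'.Chain ![a,b,c,e] :=
      chain4_intro C' nab nac nae nbc nbe nce h1' h3'
    have hbce : C'.btw b c e := ((chain4_iff C' nab nac nae nbc nbe nce).mp hc').2.2.2
    refine ⟨fun he => btw_asym' C b4 (he.mpr hbce), ?_⟩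
    exact mix8 hd h' h nab nac nae nbc nbe nce hc' hC
  · -- C-order (a,c,b,e) : impossible
    obtain ⟨b1, b2, b3, b4⟩ := (chain4_iff C nac nab nae nbc.symm nce nbe).mp hC
    -- b1 : btw a c b, b2 : btw a c e, b3 : btw a b e, b4 : btw c b e
    have h1' : ¬ C'.btw a b c := fun hx =>
      btw_asym' C b1 (e1.mpr hx)
    have h2' : C'.btw a b e := e2.mp b3
    have h3' : C'.btw a e c := btw_flip C' nac nce nae
      (fun hx => e3 ⟨fun _ => hx, fun _ => b2⟩)
    exact absurd (C'.btw_trans h2' h3') h1'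
  · -- C-order (a,c,e,b)
    obtain ⟨b1, b2, b3, b4⟩ := (chain4_iff C nac nae nab nce nbc.symm nbe.symm).mp hC
    -- b1 : btw a c e, b2 : btw a c b, b3 : btw a e b, b4 : btw c e b
    have h1' : C'.btw a c b := btw_flip C' nab nbc nac
      (fun hx => btw_asym' C b2 (e1.mpr hx))
    have h2' : C'.btw a e b := btw_flip C' nab nbe nae
      (fun hx => btw_asym' C b3 (e2.mpr hx))
    have h3' : C'.btw a e c := btw_flip C' nac nce nae
      (fun hx => e3 ⟨fun _ => hx, fun _ => b1⟩)
    have hc' : C'.Chain ![a,e,c,b] :=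
      chain4_intro C' nae nac nab nce.symm nbe.symm nbc.symm h3' h1'
    -- rotate C-chain (a,c,e,b) to (b,a,c,e); rotate C'-chain (a,e,c,b) to (b,a,e,c)
    have r1 := chain4_rot C nac nae nab nce nbc.symm nbe.symm hC
    have r2 := chain4_rot C nce nbc.symm nac.symm nbe.symm nae.symm nab.symm r1
    have r3 := chain4_rot C nbe.symm nae.symm nce.symm nab.symm nbc nac r2
    have r1' := chain4_rot C' nae nac nab nce.symm nbe.symm nbc.symm hc'
    have r2' := chain4_rot C' nce.symm nbe.symm nae.symm nbc.symm nac.symm nab.symm r1'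
    have r3' := chain4_rot C' nbc.symm nac.symm nce nab.symm nbe nae r2'
    have m := mix8 hd h h' nab.symm nbc nbe nac nae nce r3 r3'
    rw [hd.1 b a] at m
    refine ⟨?_, ⟨m.1.2.2.1, m.1.2.2.2, m.1.1, m.1.2.1⟩, ⟨m.2.2.2.1, m.2.2.2.2, m.2.1, m.2.2.1⟩⟩
    have hC'b : C'.btw e c b := ((chain4_iff C' nae nac nab nce.symm nbe.symm nbc.symm).mp hc').2.2.2
    have : ¬ C'.btw b c e := fun hx => C'.asymm hx hC'b
    exact fun he => this (he.mp (btw_cyc2 C b4))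
  · -- C-order (a,e,b,c) : impossible
    obtain ⟨b1, b2, b3, b4⟩ := (chain4_iff C nae nab nac nbe.symm nce.symm nbc).mp hC
    -- b1 : btw a e b, b2 : btw a e c, b3 : btw a b c, b4 : btw e b c
    have h1' : C'.btw a b c := e1.mp b3
    have h2' : C'.btw a e b := btw_flip C' nab nbe nae
      (fun hx => btw_asym' C b1 (e2.mpr hx))
    have h3' : C'.btw a c e := by
      by_contra hx
      exact e3 ⟨fun hy => absurd hy (btw_asym' C b2), fun hy => absurd hy hx⟩
    exact absurd (C'.btw_trans h1' h3') (btw_asym' C' h2')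
  · -- C-order (a,e,c,b)
    obtain ⟨b1, b2, b3, b4⟩ := (chain4_iff C nae nac nab nce.symm nbe.symm nbc.symm).mp hC
    -- b1 : btw a e c, b2 : btw a e b, b3 : btw a c b, b4 : btw e c b
    have h1' : C'.btw a c b := btw_flip C' nab nbc nac
      (fun hx => btw_asym' C b3 (e1.mpr hx))
    have h2' : C'.btw a e b := btw_flip C' nab nbe nae
      (fun hx => btw_asym' C b2 (e2.mpr hx))
    have h3' : C'.btw a c e := by
      by_contra hx
      exact e3 ⟨fun hy => absurd hy (btw_asym' C b1), fun hy => absurd hy hx⟩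
    have hc' : C'.Chain ![a,c,e,b] :=
      chain4_intro C' nac nae nab nce nbc.symm nbe.symm h3' h2'
    have r1 := chain4_rot C nae nac nab nce.symm nbe.symm nbc.symm hC
    have r2 := chain4_rot C nce.symm nbe.symm nae.symm nbc.symm nac.symm nab.symm r1
    have r3 := chain4_rot C nbc.symm nac.symm nce nab.symm nbe nae r2
    have r1' := chain4_rot C' nac nae nab nce nbc.symm nbe.symm hc'
    have r2' := chain4_rot C' nce nbc.symm nac.symm nbe.symm nae.symm nab.symm r1'
    have r3' := chain4_rot C' nbe.symm nae.symm nce.symm nab.symm nbc nac r2'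
    have m := mix8 hd h' h nab.symm nbc nbe nac nae nce r3' r3
    rw [hd.1 b a] at m
    refine ⟨?_, ⟨m.1.2.2.1, m.1.2.2.2, m.1.1, m.1.2.1⟩, ⟨m.2.2.2.1, m.2.2.2.2, m.2.1, m.2.2.1⟩⟩
    have hc'b : C'.btw c e b := ((chain4_iff C' nac nae nab nce nbc.symm nbe.symm).mp hc').2.2.2
    have hCside : ¬ C.btw b c e := fun hx => C.asymm hx b4
    exact fun he => hCside (he.mpr (btw_cyc2 C' hc'b))

end Stmt19
namespace Stmt19
variable {X : Type*}

lemma eps_revO {C C' : CircOrder X} {u v w : X} (h1 : u ≠ v) (h2 : v ≠ w) (h3 : u ≠ w) :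
    epsP C (revO C') u v w ↔ ¬ epsP C C' u v w := by
  unfold epsP
  rw [revO_btw, ← not_btw_iff C' h1 h2 h3]
  tauto

lemma pat {C C' : CircOrder X} {d : X → X → ℝ} (hd : Dissim d)
    (h : sqcCompat C d) (h' : sqcCompat C' d) {a b c e : X}
    (nab : a ≠ b) (nac : a ≠ c) (nae : a ≠ e) (nbc : b ≠ c) (nbe : b ≠ e) (nce : c ≠ e)
    (e1 : epsP C C' a b c) (e2 : epsP C C' a b e) (e3 : epsP C C' a c e) :
    epsP C C' b c e := by
  by_contra h4
  exact (mix hd h h' nab.symm nbc nbe nac nae nce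
    ((eps_swap12 nab nbc nac).mpr e1) ((eps_swap12 nab nbe nae).mpr e2) h4).1 e3

lemma pat_neg {C C' : CircOrder X} {d : X → X → ℝ} (hd : Dissim d)
    (h : sqcCompat C d) (h' : sqcCompat C' d) {a b c e : X}
    (nab : a ≠ b) (nac : a ≠ c) (nae : a ≠ e) (nbc : b ≠ c) (nbe : b ≠ e) (nce : c ≠ e)
    (e1 : ¬ epsP C C' a b c) (e2 : ¬ epsP C C' a b e) (e3 : ¬ epsP C C' a c e) :
    ¬ epsP C C' b c e := by
  have := pat hd h (sqc_revO h') nab nac nae nbc nbe nce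
    ((eps_revO nab nbc nac).mpr e1) ((eps_revO nab nbe nae).mpr e2)
    ((eps_revO nac nce nae).mpr e3)
  exact (eps_revO nbc nce nbe).mp this

lemma sqc4r1 {C : CircOrder X} {d : X → X → ℝ} (h : sqcCompat C d) {x y z t : X}
    (h1 : x ≠ y) (h2 : x ≠ z) (h3 : x ≠ t) (h4 : y ≠ z) (h5 : y ≠ t) (h6 : z ≠ t)
    (hc : C.Chain ![x,y,z,t]) : min (d z t) (d x t) < d y t := by
  have r1 := chain4_rot C h1 h2 h3 h4 h5 h6 hc
  exact sqc4 h h4 h5 h1.symm h6 h2.symm h3.symm r1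

lemma sqc4r2 {C : CircOrder X} {d : X → X → ℝ} (h : sqcCompat C d) {x y z t : X}
    (h1 : x ≠ y) (h2 : x ≠ z) (h3 : x ≠ t) (h4 : y ≠ z) (h5 : y ≠ t) (h6 : z ≠ t)
    (hc : C.Chain ![x,y,z,t]) : min (d t x) (d y x) < d z x := by
  have r1 := chain4_rot C h1 h2 h3 h4 h5 h6 hc
  have r2 := chain4_rot C h4 h5 h1.symm h6 h2.symm h3.symm r1
  exact sqc4 h h6 h2.symm h4.symm h3.symm h5.symm h1 r2

lemma sqc4r3 {C : CircOrder X} {d : X → X → ℝ} (h : sqcCompat C d) {x y z t : X}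
    (h1 : x ≠ y) (h2 : x ≠ z) (h3 : x ≠ t) (h4 : y ≠ z) (h5 : y ≠ t) (h6 : z ≠ t)
    (hc : C.Chain ![x,y,z,t]) : min (d x y) (d z y) < d t y := by
  have r1 := chain4_rot C h1 h2 h3 h4 h5 h6 hc
  have r2 := chain4_rot C h4 h5 h1.symm h6 h2.symm h3.symm r1
  have r3 := chain4_rot C h6 h2.symm h4.symm h3.symm h5.symm h1 r2
  exact sqc4 h h3.symm h5.symm h6.symm h1 h2 h4 r3

lemma abs4 {C : CircOrder X} {d : X → X → ℝ} (h : sqcCompat C d) (hd : Dissim d)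
    {p q r s : X}
    (n1 : p ≠ q) (n2 : p ≠ r) (n3 : p ≠ s) (n4 : q ≠ r) (n5 : q ≠ s) (n6 : r ≠ s)
    (b1 : d r p < d r s) (b2 : d r q < d r s) (c1 : d p q < d s p) (c2 : d p q < d s q) :
    d p q < d r s := by
  by_contra hg
  push_neg at hg
  have sy := hd.1
  rcases cases6 C n1 n2 n3 n4 n5 n6 with hc | hc | hc | hc | hc | hc
  · have := sqc4r2 h n1 n2 n3 n4 n5 n6 hc
    rw [sy q p] at this
    rcases min_lt_iff.mp this with hx | hx <;> linarith
  · have := sqc4r3 h n1 n3 n2 n5 n4 n6.symm hc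
    rcases min_lt_iff.mp this with hx | hx <;> linarith
  · have := sqc4r1 h n2 n1 n3 n4.symm n6 n5 hc
    rw [sy q s, sy p s] at this
    rcases min_lt_iff.mp this with hx | hx <;> linarith
  · have := sqc4r1 h n2 n3 n1 n6 n4.symm n5.symm hc
    rcases min_lt_iff.mp this with hx | hx <;> linarith
  · have := sqc4r3 h n3 n1 n2 n5.symm n6.symm n4 hc
    rw [sy p s, sy q s] at this
    rcases min_lt_iff.mp this with hx | hx <;> linarith
  · have := sqc4r2 h n3 n2 n1 n6.symm n5.symm n4.symm hc
    rw [sy q p] at this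
    rcases min_lt_iff.mp this with hx | hx <;> linarith

end Stmt19

namespace Stmt19
variable {X : Type*} {C C' : CircOrder X} {u v w : X}

lemma eps_to_rot (h : epsP C C' u v w) : epsP C C' v w u := eps_rot.mp h

lemma neps_to_rot (h : ¬ epsP C C' u v w) : ¬ epsP C C' v w u :=
  fun hx => h (eps_rot.mpr hx)

lemma eps_to_swap23 (h1 : u ≠ v) (h2 : v ≠ w) (h3 : u ≠ w) (h : epsP C C' u v w) :
    epsP C C' u w v := (eps_swap23 h1 h2 h3).mpr h

lemma neps_to_swap23 (h1 : u ≠ v) (h2 : v ≠ w) (h3 : u ≠ w) (h : ¬ epsP C C' u v w) :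
    ¬ epsP C C' u w v := fun hx => h ((eps_swap23 h1 h2 h3).mp hx)

lemma eps_to_swap12 (h1 : u ≠ v) (h2 : v ≠ w) (h3 : u ≠ w) (h : epsP C C' u v w) :
    epsP C C' v u w := (eps_swap12 h1 h2 h3).mpr h

lemma neps_to_swap12 (h1 : u ≠ v) (h2 : v ≠ w) (h3 : u ≠ w) (h : ¬ epsP C C' u v w) :
    ¬ epsP C C' v u w := fun hx => h ((eps_swap12 h1 h2 h3).mp hx)

end Stmt19
namespace Stmt19
variable {X : Type*}

lemma classify {C C' : CircOrder X} {d : X → X → ℝ} (hd : Dissim d)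
    (h : sqcCompat C d) (h' : sqcCompat C' d) {a b c e : X}
    (nab : a ≠ b) (nac : a ≠ c) (nae : a ≠ e) (nbc : b ≠ c) (nbe : b ≠ e) (nce : c ≠ e)
    (Sabc : epsP C C' a b c) (Sabe : epsP C C' a b e) (nSace : ¬ epsP C C' a c e) :
    ∃ N : Set X, a ∈ N ∧ b ∈ N ∧ c ∉ N ∧ e ∉ N ∧
      (∀ x y z : X, x ∈ N → y ∈ N → x ≠ y → z ≠ x → z ≠ y → epsP C C' x y z) ∧
      (∀ x y z : X, x ∉ N → y ∉ N → x ≠ y → z ≠ x → z ≠ y → ¬ epsP C C' x y z) := by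
  classical
  have hacb : epsP C C' a c b := eps_to_swap23 nab nbc nac Sabc
  have mseed := mix hd h h' nab nac nae nbc nbe nce Sabc Sabe nSace
  have M0 := mseed.2
  have St1 : ∀ x, x ≠ a → x ≠ c → x ≠ e → epsP C C' a c x → (epsP C C' a e x ∧
      ¬ epsP C C' x c e ∧
      (d a x < d a c ∧ d a x < d a e ∧ d a x < d x c ∧ d a x < d x e)) := by
    intro x nxa nxc nxe hx
    by_cases hax : epsP C C' a e x
    · have e1 : epsP C C' a x c := eps_to_swap23 nac nxc.symm nxa.symm hx
      have e2 : epsP C C' a x e := eps_to_swap23 nae nxe.symm nxa.symm hax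
      have m := mix hd h h' nxa.symm nac nae nxc nxe nce e1 e2 nSace
      exact ⟨hax, m.1, m.2.1⟩
    · exfalso
      by_cases hce : epsP C C' c e x
      · have e1 : epsP C C' c x a := eps_to_rot hx
        have e2 : epsP C C' c x e := eps_to_swap23 nce nxe.symm nxc.symm hce
        have e3 : ¬ epsP C C' c a e := neps_to_swap12 nac nce nae nSace
        have m := mix hd h h' nxc.symm nac.symm nce nxa nxe nae e1 e2 e3
        have h1 : d a e < d c e := m.2.2.2.1
        have h2 : d c e < d a e := M0.2.2.1
        linarith
      · exact (pat_neg hd h h' nae.symm nce.symm nxe.symm nac nxa.symm nxc.symm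
          (neps_to_rot (neps_to_rot nSace))
          (neps_to_swap12 nae nxe.symm nxa.symm hax)
          (neps_to_swap12 nce nxe.symm nxc.symm hce)) hx
  have St5 : ∀ f, f ≠ a → f ≠ c → ¬ epsP C C' a c f → (epsP C C' a b f ∧
      ¬ epsP C C' b c f ∧
      (d a b < d a c ∧ d a b < d a f ∧ d a b < d b c ∧ d a b < d b f) ∧
      (d c f < d a c ∧ d c f < d a f ∧ d c f < d b c ∧ d c f < d b f)) := by
    intro f nfa nfc hf
    have nbf : b ≠ f := fun hh => hf (hh ▸ hacb)
    by_cases habf : epsP C C' a b f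
    · have m := mix hd h h' nab nac nfa.symm nbc nbf nfc.symm Sabc habf hf
      exact ⟨habf, m.1, m.2⟩
    · exfalso
      by_cases hbcf : epsP C C' b c f
      · have e1 : epsP C C' b c a := eps_to_rot Sabc
        have e3 : ¬ epsP C C' b a f := neps_to_swap12 nab nbf nfa.symm habf
        have m := mix hd h h' nbc nab.symm nbf nac.symm nfc.symm nfa.symm e1 hbcf e3
        have h1 : d b c < d b a := m.2.1.1
        have h2 : d a b < d b c := M0.1.2.2.1
        rw [hd.1 b a] at h1
        linarith
      · exact (pat_neg hd h h' nfa nbf.symm nfc nab nac nbc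
          (neps_to_rot (neps_to_rot habf))
          (neps_to_rot (neps_to_rot hf))
          (neps_to_rot (neps_to_rot hbcf))) Sabc
  have St4 : ∀ f, f ≠ a → f ≠ c → f ≠ e → ¬ epsP C C' a c f →
      (¬ epsP C C' a e f ∧ ¬ epsP C C' c e f) := by
    intro f nfa nfc nfe hf
    by_cases haef : epsP C C' a e f
    · exfalso
      by_cases hcef : epsP C C' c e f
      · have e1 : epsP C C' e f a := eps_to_rot haef
        have e2 : epsP C C' e f c := eps_to_rot hcef
        have e3 : ¬ epsP C C' e a c := neps_to_rot (neps_to_rot nSace)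
        have m := mix hd h h' nfe.symm nae.symm nce.symm nfa nfc nac e1 e2 e3
        have h1 : d a c < d e c := m.2.2.2.1
        have h2 : d c e < d a c := M0.2.1
        rw [hd.1 e c] at h1
        linarith
      · exact (pat_neg hd h h' nac.symm nce nfc.symm nae nfa.symm nfe.symm
          (neps_to_swap12 nac nce nae nSace)
          (neps_to_swap12 nac nfc.symm nfa.symm hf)
          hcef) haef
    · refine ⟨haef, fun hcef => ?_⟩
      exact (pat_neg hd h h' nac nae nfa.symm nce nfc.symm nfe.symm nSace hf haef) hcef
  have M4 : ∀ f, f ≠ a → f ≠ c → f ≠ e → ¬ epsP C C' a c f →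
      (¬ epsP C C' b e f ∧
      (d a b < d a e ∧ d a b < d a f ∧ d a b < d b e ∧ d a b < d b f) ∧
      (d e f < d a e ∧ d e f < d a f ∧ d e f < d b e ∧ d e f < d b f)) := by
    intro f nfa nfc nfe hf
    have nbf : b ≠ f := fun hh => hf (hh ▸ hacb)
    exact mix hd h h' nab nae nfa.symm nbe nbf nfe.symm Sabe
      (St5 f nfa nfc hf).1 (St4 f nfa nfc nfe hf).1
  have St12 : ∀ f g, f ≠ a → f ≠ c → f ≠ e → ¬ epsP C C' a c f →
      g ≠ a → g ≠ c → g ≠ e → ¬ epsP C C' a c g → f ≠ g → ¬ epsP C C' e f g := by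
    intro f g nfa nfc nfe hf nga ngc nge hg nfg
    by_cases hefg : epsP C C' e f g
    · exfalso
      by_cases hafg : epsP C C' a f g
      · have h'' := sqc_revO (C := C') h'
        have m := mix hd h h'' nae nfa.symm nga.symm nfe.symm nge.symm nfg
          ((eps_revO nae nfe.symm nfa.symm).mpr (St4 f nfa nfc nfe hf).1)
          ((eps_revO nae nge.symm nga.symm).mpr (St4 g nga ngc nge hg).1)
          (fun hx => (eps_revO nfa.symm nfg nga.symm).mp hx hafg)
        have h1 : d a e < d e f := m.2.1.2.2.1
        have h2 : d e f < d a e := (M4 f nfa nfc nfe hf).2.2.1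
        linarith
      · exact (pat_neg hd h h' nae nfa.symm nga.symm nfe.symm nge.symm nfg
          (St4 f nfa nfc nfe hf).1 (St4 g nga ngc nge hg).1 hafg) hefg
    · exact hefg
  have St12' : ∀ f g, f ≠ a → f ≠ c → ¬ epsP C C' a c f →
      g ≠ a → g ≠ c → ¬ epsP C C' a c g → f ≠ g → ¬ epsP C C' c f g := by
    intro f g nfa nfc hf nga ngc hg nfg
    by_cases hge : g = e
    · subst hge
      exact neps_to_swap23 nce nfg.symm nfc.symm (St4 f nfa nfc nfg hf).2
    · by_cases hfe : f = e
      · subst hfe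
        exact (St4 g nga ngc (fun hh => hge hh) hg).2
      · exact pat_neg hd h h' nce.symm (Ne.symm hfe) (Ne.symm hge)
          nfc.symm ngc.symm nfg
          (neps_to_swap12 nce (Ne.symm hfe) nfc.symm (St4 f nfa nfc hfe hf).2)
          (neps_to_swap12 nce (Ne.symm hge) ngc.symm (St4 g nga ngc hge hg).2)
          (St12 f g nfa nfc hfe hf nga ngc hge hg nfg)
  have St7 : ∀ x y, x ≠ a → x ≠ c → x ≠ e → epsP C C' a c x →
      y ≠ a → y ≠ c → y ≠ e → epsP C C' a c y → x ≠ y → epsP C C' a x y := by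
    intro x y nxa nxc nxe hx nya nyc nye hy nxy
    by_cases haxy : epsP C C' a x y
    · exact haxy
    · exfalso
      have m := mix hd h h' nac nxa.symm nya.symm nxc.symm nyc.symm nxy hx hy haxy
      have h1 : d a c < d a x := m.2.1.1
      have h2 : d a x < d a c := (St1 x nxa nxc nxe hx).2.2.1
      linarith
  have St9 : ∀ x f, x ≠ a → x ≠ c → x ≠ e → epsP C C' a c x →
      f ≠ a → f ≠ c → f ≠ e → ¬ epsP C C' a c f →
      epsP C C' a x f ∧ ¬ epsP C C' x c f := by
    intro x f nxa nxc nxe hx nfa nfc nfe hf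
    have nxf : x ≠ f := fun hh => hf (hh ▸ hx)
    by_cases haxf : epsP C C' a x f
    · have e1 : epsP C C' a x c := eps_to_swap23 nac nxc.symm nxa.symm hx
      have m := mix hd h h' nxa.symm nac nfa.symm nxc nxf nfc.symm e1 haxf hf
      exact ⟨haxf, m.1⟩
    · exfalso
      by_cases hcxf : epsP C C' c x f
      · have e1 : epsP C C' c x a := eps_to_rot hx
        have e3 : ¬ epsP C C' c a f := neps_to_swap12 nac nfc.symm nfa.symm hf
        have m := mix hd h h' nxc.symm nac.symm nfc.symm nxa nxf nfa.symm e1 hcxf e3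
        have h1 : d c x < d x a := m.2.1.2.2.1
        have h2 : d a x < d x c := (St1 x nxa nxc nxe hx).2.2.2.2.1
        rw [hd.1 c x] at h1
        rw [hd.1 a x] at h2
        linarith
      · exact (pat_neg hd h h' nfa nfc nxf.symm nac nxa.symm nxc.symm
          (neps_to_rot (neps_to_rot hf))
          (neps_to_rot (neps_to_rot haxf))
          (neps_to_rot (neps_to_rot hcxf))) hx
  -- row a
  have Ra : ∀ x z, x ≠ a → x ≠ c → x ≠ e → epsP C C' a c x →
      z ≠ a → z ≠ x → epsP C C' a x z := by
    intro x z nxa nxc nxe hx nza nzx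
    by_cases hzc : z = c
    · subst hzc
      exact eps_to_swap23 nac nxc.symm nxa.symm hx
    · by_cases hze : z = e
      · subst hze
        exact eps_to_swap23 nae nxe.symm nxa.symm (St1 x nxa nxc nxe hx).1
      · by_cases hz : epsP C C' a c z
        · exact St7 x z nxa nxc nxe hx nza hzc hze hz nzx.symm
        · exact (St9 x z nxa nxc nxe hx nza hzc hze hz).1
  -- row c
  have Rc : ∀ q z, q ≠ a → q ≠ c → ¬ epsP C C' a c q →
      z ≠ c → z ≠ q → ¬ epsP C C' c q z := by
    intro q z nqa nqc hq nzc nzq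
    by_cases hza : z = a
    · subst hza
      exact neps_to_rot hq
    · by_cases hze : z = e
      · subst hze
        exact neps_to_swap23 nce nzq nqc.symm (St4 q nqa nqc nzq.symm hq).2
      · by_cases hz : epsP C C' a c z
        · by_cases hqe : q = e
          · subst hqe
            exact neps_to_rot (St1 z hza nzc hze hz).2.1
          · exact neps_to_rot (St9 z q hza nzc hze hz nqa nqc hqe hq).2
        · exact St12' q z nqa nqc hq hza nzc hz nzq.symm
  refine ⟨{x | x = a ∨ (x ≠ a ∧ x ≠ c ∧ x ≠ e ∧ epsP C C' a c x)}, Or.inl rfl,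
    Or.inr ⟨nab.symm, nbc, nbe, hacb⟩, ?_, ?_, ?_, ?_⟩
  · rintro (hh | hp)
    · exact nac hh.symm
    · exact hp.2.1 rfl
  · rintro (hh | hp)
    · exact nae hh.symm
    · exact hp.2.2.1 rfl
  · -- K1
    rintro x y z hxN hyN nxy nzx nzy
    rcases hxN with rfl | hx
    · rcases hyN with rfl | hy
      · exact absurd rfl nxy
      · exact Ra y z hy.1 hy.2.1 hy.2.2.1 hy.2.2.2 nzx nzy
    · rcases hyN with rfl | hy
      · exact eps_to_swap12 hx.1.symm nzx.symm nzy.symm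
          (Ra x z hx.1 hx.2.1 hx.2.2.1 hx.2.2.2 nzy nzx)
      · by_cases hza : z = a
        · subst hza
          exact eps_to_rot (St7 x y hx.1 hx.2.1 hx.2.2.1 hx.2.2.2
            hy.1 hy.2.1 hy.2.2.1 hy.2.2.2 nxy)
        · exact pat hd h h' hx.1.symm hy.1.symm (fun hh => hza hh.symm) nxy nzx.symm nzy.symm
            (St7 x y hx.1 hx.2.1 hx.2.2.1 hx.2.2.2 hy.1 hy.2.1 hy.2.2.1 hy.2.2.2 nxy)
            (Ra x z hx.1 hx.2.1 hx.2.2.1 hx.2.2.2 hza nzx)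
            (Ra y z hy.1 hy.2.1 hy.2.2.1 hy.2.2.2 hza nzy)
  · -- K2
    have hqf : ∀ x, x ∉ {x | x = a ∨ (x ≠ a ∧ x ≠ c ∧ x ≠ e ∧ epsP C C' a c x)} →
        x = c ∨ (x ≠ a ∧ x ≠ c ∧ ¬ epsP C C' a c x) := by
      intro x hx
      by_cases hxc : x = c
      · exact Or.inl hxc
      · have hxa : x ≠ a := fun hh => hx (Or.inl hh)
        refine Or.inr ⟨hxa, hxc, ?_⟩
        by_cases hxe : x = e
        · subst hxe
          exact nSace
        · exact fun heps => hx (Or.inr ⟨hxa, hxc, hxe, heps⟩)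
    rintro x y z hxN hyN nxy nzx nzy
    rcases hqf x hxN with rfl | hx
    · rcases hqf y hyN with rfl | hy
      · exact absurd rfl nxy
      · exact Rc y z hy.1 hy.2.1 hy.2.2 nzx nzy
    · rcases hqf y hyN with rfl | hy
      · exact neps_to_swap12 hx.2.1.symm nzx.symm nzy.symm
          (Rc x z hx.1 hx.2.1 hx.2.2 nzy nzx)
      · by_cases hzc : z = c
        · subst hzc
          exact neps_to_rot (St12' x y hx.1 hx.2.1 hx.2.2 hy.1 hy.2.1 hy.2.2 nxy)
        · exact pat_neg hd h h' hx.2.1.symm hy.2.1.symm (fun hh => hzc hh.symm)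
            nxy nzx.symm nzy.symm
            (St12' x y hx.1 hx.2.1 hx.2.2 hy.1 hy.2.1 hy.2.2 nxy)
            (Rc x z hx.1 hx.2.1 hx.2.2 hzc nzx)
            (Rc y z hy.1 hy.2.1 hy.2.2 hzc nzy)

end Stmt19
namespace Stmt19
variable {X : Type*}

theorem forward [Fintype X] {d : X → X → ℝ} (hd : Dissim d)
    {C C' : CircOrder X} (h : sqcCompat C d) (h' : sqcCompat C' d)
    (hne : ¬ (∀ u v w : X, C'.btw u v w ↔ C.btw u v w))
    (hnr : ¬ (∀ u v w : X, C'.btw u v w ↔ C.btw w v u)) :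
    ∃ (N F : Set X) (δ : ℝ), 0 ≤ δ ∧ N ∪ F = Set.univ ∧ N ∩ F = ∅ ∧
      1 < N.ncard ∧ 1 < F.ncard ∧
      ∀ u v : X, δ < d u v ↔ Xor' (u ∈ N) (v ∈ N) := by
  classical
  simp only [not_forall] at hne hnr
  obtain ⟨x0, y0, z0, hx⟩ := hne
  obtain ⟨u0, v0, w0, hu⟩ := hnr
  have mxy : x0 ≠ y0 := by
    rintro rfl
    exact hx (iff_of_false (fun hb => (C'.distinct hb).1 rfl) (fun hb => (C.distinct hb).1 rfl))
  have myz : y0 ≠ z0 := by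
    rintro rfl
    exact hx (iff_of_false (fun hb => (C'.distinct hb).2.1 rfl) (fun hb => (C.distinct hb).2.1 rfl))
  have mxz : x0 ≠ z0 := by
    rintro rfl
    exact hx (iff_of_false (fun hb => (C'.distinct hb).2.2 rfl) (fun hb => (C.distinct hb).2.2 rfl))
  have Tneg : ¬ epsP C C' x0 y0 z0 := fun he => hx he.symm
  have nuv : u0 ≠ v0 := by
    rintro rfl
    exact hu (iff_of_false (fun hb => (C'.distinct hb).1 rfl) (fun hb => (C.distinct hb).2.1 rfl))
  have nvw : v0 ≠ w0 := by
    rintro rfl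
    exact hu (iff_of_false (fun hb => (C'.distinct hb).2.1 rfl) (fun hb => (C.distinct hb).1 rfl))
  have nuw : u0 ≠ w0 := by
    rintro rfl
    exact hu (iff_of_false (fun hb => (C'.distinct hb).2.2 rfl) (fun hb => (C.distinct hb).2.2 rfl))
  have Tpos : epsP C C' u0 v0 w0 := by
    have hw := not_btw_iff C nuv nvw nuw
    rw [← hw] at hu
    unfold epsP
    tauto
  -- extraction of a seed quadruple
  have hseed : ∃ a b c e : X, a ≠ b ∧ a ≠ c ∧ a ≠ e ∧ b ≠ c ∧ b ≠ e ∧ c ≠ e ∧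
      epsP C C' a b c ∧ epsP C C' a b e ∧ ¬ epsP C C' a c e := by
    by_cases hH : ∀ p q r s : X, p ≠ q → p ≠ r → p ≠ s → q ≠ r → q ≠ s → r ≠ s →
        epsP C C' p q r → epsP C C' p q s
    · exfalso
      have step1 : ∀ t, t ≠ u0 → t ≠ v0 → epsP C C' u0 v0 t := by
        intro t h1 h2
        by_cases ht : t = w0
        · subst ht; exact Tpos
        · exact hH u0 v0 w0 t nuv nuw h1.symm nvw h2.symm (fun hh => ht hh.symm) Tpos
      have step2 : ∀ s t, s ≠ u0 → t ≠ u0 → s ≠ t → epsP C C' u0 s t := by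
        intro s t hs ht hst
        by_cases hsv : s = v0
        · subst hsv; exact step1 t ht hst.symm
        · by_cases htv : t = v0
          · subst htv
            exact eps_to_swap23 nuv (fun hh => hsv hh.symm) hs.symm (step1 s hs hsv)
          · exact hH u0 s v0 t hs.symm nuv ht.symm hsv hst (fun hh => htv hh.symm)
              (eps_to_swap23 nuv (fun hh => hsv hh.symm) hs.symm (step1 s hs hsv))
      have final : epsP C C' x0 y0 z0 := by
        by_cases h1 : u0 = x0
        · subst h1; exact step2 y0 z0 mxy.symm mxz.symm myz
        · by_cases h2 : u0 = y0
          · subst h2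
            exact eps_to_swap12 mxy.symm mxz myz (step2 x0 z0 mxy myz.symm mxz)
          · by_cases h3 : u0 = z0
            · subst h3
              exact eps_to_rot (step2 x0 y0 mxz myz mxy)
            · have e1 : epsP C C' x0 y0 u0 :=
                eps_to_rot (step2 x0 y0 (fun hh => h1 hh.symm) (fun hh => h2 hh.symm) mxy)
              exact hH x0 y0 u0 z0 mxy (fun hh => h1 hh.symm) mxz
                (fun hh => h2 hh.symm) myz (fun hh => h3 hh) e1
      exact Tneg final
    · push_neg at hH
      obtain ⟨p, q, r, s, n1, n2, n3, n4, n5, n6, e1, ne2⟩ := hH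
      by_cases f1 : epsP C C' p r s
      · by_cases f2 : epsP C C' q r s
        · exact absurd (pat hd h h' n2.symm n4.symm n6 n1 n3 n5
            (eps_to_rot (eps_to_rot e1)) (eps_to_swap12 n2 n6 n3 f1)
            (eps_to_swap12 n4 n6 n5 f2)) ne2
        · exact ⟨p, r, q, s, n2, n1, n3, n4.symm, n6, n5,
            eps_to_swap23 n1 n4 n2 e1, f1, ne2⟩
      · by_cases f2 : epsP C C' q r s
        · exact ⟨q, r, p, s, n4, n1.symm, n5, n2.symm, n6, n3,
            eps_to_rot e1, f2, neps_to_swap12 n1 n5 n3 ne2⟩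
        · exact absurd e1 (pat_neg hd h h' n3.symm n5.symm n6.symm n1 n2 n4
            (neps_to_rot (neps_to_rot ne2)) (neps_to_rot (neps_to_rot f1))
            (neps_to_rot (neps_to_rot f2)))
  obtain ⟨a, b, c, e, nab, nac, nae, nbc, nbe, nce, Sabc, Sabe, nSace⟩ := hseed
  obtain ⟨N, haN, hbN, hcN, heN, K1, K2⟩ :=
    classify hd h h' nab nac nae nbc nbe nce Sabc Sabe nSace
  have starM : ∀ u v f g : X, u ∈ N → v ∈ N → f ∉ N → g ∉ N → u ≠ v → f ≠ g →
      (d u v < d u f ∧ d u v < d u g ∧ d u v < d v f ∧ d u v < d v g) ∧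
      (d f g < d u f ∧ d f g < d u g ∧ d f g < d v f ∧ d f g < d v g) := by
    intro u v f g hu hv hf hg nuv nfg
    have nuf : u ≠ f := fun hh => hf (hh ▸ hu)
    have nug : u ≠ g := fun hh => hg (hh ▸ hu)
    have nvf : v ≠ f := fun hh => hf (hh ▸ hv)
    have nvg : v ≠ g := fun hh => hg (hh ▸ hv)
    have e1 : epsP C C' u v f := K1 u v f hu hv nuv nuf.symm nvf.symm
    have e2 : epsP C C' u v g := K1 u v g hu hv nuv nug.symm nvg.symm
    have e3 : ¬ epsP C C' u f g :=
      neps_to_rot (neps_to_rot (K2 f g u hf hg nfg nuf nug))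
    exact (mix hd h h' nuv nuf nug nvf nvg nfg e1 e2 e3).2
  have LN : ∀ w1 w2 u v : X, w1 ∈ N → w2 ∈ N → w1 ≠ w2 → u ∈ N → v ∉ N →
      d w1 w2 < d u v := by
    intro w1 w2 u v h1 h2 h12 hu hv
    have hgF : (if v = c then e else c) ∉ N := by
      split_ifs
      exacts [heN, hcN]
    have hvg : v ≠ (if v = c then e else c) := by
      split_ifs with hvc
      · subst hvc; exact nce
      · exact fun hh => hvc hh
    by_cases huw : u = w1 ∨ u = w2
    · have m := (starM w1 w2 v _ h1 h2 hv hgF h12 hvg).1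
      rcases huw with rfl | rfl
      · exact m.1
      · exact m.2.2.1
    · push_neg at huw
      obtain ⟨hu1, hu2⟩ := huw
      have nw1v : w1 ≠ v := fun hh => hv (hh ▸ h1)
      have nw2v : w2 ≠ v := fun hh => hv (hh ▸ h2)
      have nuv : u ≠ v := fun hh => hv (hh ▸ hu)
      have b1 : d u w1 < d u v :=
        ((starM u w1 v _ hu h1 hv hgF (fun hh => hu1 hh) hvg).1).1
      have b2 : d u w2 < d u v :=
        ((starM u w2 v _ hu h2 hv hgF (fun hh => hu2 hh) hvg).1).1
      have m := (starM w1 w2 v _ h1 h2 hv hgF h12 hvg).1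
      have c1 : d w1 w2 < d v w1 := by rw [hd.1 v w1]; exact m.1
      have c2 : d w1 w2 < d v w2 := by rw [hd.1 v w2]; exact m.2.2.1
      exact abs4 h hd h12 (fun hh => hu1 hh.symm) nw1v
        (fun hh => hu2 hh.symm) nw2v nuv b1 b2 c1 c2
  have LF : ∀ w1 w2 u v : X, w1 ∉ N → w2 ∉ N → w1 ≠ w2 → u ∈ N → v ∉ N →
      d w1 w2 < d u v := by
    intro w1 w2 u v h1 h2 h12 hu hv
    have hnN : (if u = a then b else a) ∈ N := by
      split_ifs
      exacts [hbN, haN]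
    have hun : u ≠ (if u = a then b else a) := by
      split_ifs with hua
      · subst hua; exact nab
      · exact fun hh => hua hh
    by_cases hvw : v = w1 ∨ v = w2
    · have m := (starM u _ w1 w2 hu hnN h1 h2 hun h12).2
      rcases hvw with rfl | rfl
      · exact m.1
      · exact m.2.1
    · push_neg at hvw
      obtain ⟨hv1, hv2⟩ := hvw
      have nw1u : w1 ≠ u := fun hh => h1 (hh ▸ hu)
      have nw2u : w2 ≠ u := fun hh => h2 (hh ▸ hu)
      have nvu : v ≠ u := fun hh => hv (hh ▸ hu)
      have b1 : d v w1 < d v u := by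
        have hm := ((starM u _ w1 v hu hnN h1 hv hun (fun hh => hv1 hh.symm)).2).2.1
        rw [hd.1 v w1, hd.1 v u]
        exact hm
      have b2 : d v w2 < d v u := by
        have hm := ((starM u _ w2 v hu hnN h2 hv hun (fun hh => hv2 hh.symm)).2).2.1
        rw [hd.1 v w2, hd.1 v u]
        exact hm
      have m2 := (starM u _ w1 w2 hu hnN h1 h2 hun h12).2
      have key := abs4 h hd h12 (fun hh => hv1 hh.symm) nw1u
        (fun hh => hv2 hh.symm) nw2u nvu b1 b2 m2.1 m2.2.1
      rwa [hd.1 v u] at key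
  -- the threshold
  set T : Finset (X × X) := Finset.univ.filter (fun pq => (pq.1 ∈ N ↔ pq.2 ∈ N)) with hT
  have hTne : (T.image fun pq => d pq.1 pq.2).Nonempty :=
    ⟨d a a, Finset.mem_image.mpr ⟨(a, a),
      Finset.mem_filter.mpr ⟨Finset.mem_univ _, Iff.rfl⟩, rfl⟩⟩
  set δ := (T.image fun pq => d pq.1 pq.2).max' hTne with hδ
  have hmem_le : ∀ u v : X, (u ∈ N ↔ v ∈ N) → d u v ≤ δ := by
    intro u v hiff
    rw [hδ]
    apply Finset.le_max'
    exact Finset.mem_image.mpr ⟨(u, v),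
      Finset.mem_filter.mpr ⟨Finset.mem_univ _, hiff⟩, rfl⟩
  have hδ0 : 0 ≤ δ := by
    have h1 := hmem_le a a Iff.rfl
    have h2 : d a a = 0 := (hd.2.2 a a).mpr rfl
    linarith
  have hcross : ∀ u v : X, u ∈ N → v ∉ N → δ < d u v := by
    intro u v hu hv
    have hδmem : δ ∈ T.image fun pq => d pq.1 pq.2 := by
      rw [hδ]
      exact Finset.max'_mem _ hTne
    obtain ⟨pq, hpqT, heq⟩ := Finset.mem_image.mp hδmem
    obtain ⟨-, hiff⟩ := Finset.mem_filter.mp hpqT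
    have hδval : δ = d pq.1 pq.2 := heq.symm
    by_cases h12 : pq.1 = pq.2
    · have hz : d pq.1 pq.2 = 0 := (hd.2.2 _ _).mpr h12
      have huv : u ≠ v := fun hh => hv (hh ▸ hu)
      have hpos : 0 < d u v :=
        lt_of_le_of_ne (hd.2.1 u v) (fun hh => huv ((hd.2.2 u v).mp hh.symm))
      rw [hδval, hz]
      exact hpos
    · rw [hδval]
      by_cases hw1 : pq.1 ∈ N
      · exact LN pq.1 pq.2 u v hw1 (hiff.mp hw1) h12 hu hv
      · exact LF pq.1 pq.2 u v hw1 (fun hh => hw1 (hiff.mpr hh)) h12 hu hv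
  refine ⟨N, Nᶜ, δ, hδ0, by simp, by simp, ?_, ?_, ?_⟩
  · have hsub : ({a, b} : Set X) ⊆ N := by
      rintro x (rfl | hx)
      · exact haN
      · rw [Set.mem_singleton_iff] at hx
        subst hx
        exact hbN
    have h2 : ({a, b} : Set X).ncard = 2 := Set.ncard_pair nab
    have := Set.ncard_le_ncard hsub N.toFinite
    omega
  · have hsub : ({c, e} : Set X) ⊆ Nᶜ := by
      rintro x (rfl | hx)
      · exact hcN
      · rw [Set.mem_singleton_iff] at hx
        subst hx
        exact heN
    have h2 : ({c, e} : Set X).ncard = 2 := Set.ncard_pair nce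
    have := Set.ncard_le_ncard hsub (Nᶜ).toFinite
    omega
  · intro u v
    constructor
    · intro hlt
      by_contra hxor
      have hiff : u ∈ N ↔ v ∈ N := by
        by_cases h1 : u ∈ N <;> by_cases h2 : v ∈ N <;> simp_all [Xor']
      have := hmem_le u v hiff
      linarith
    · rintro (⟨h1, h2⟩ | ⟨h1, h2⟩)
      · exact hcross u v h1 h2
      · have := hcross v u h1 h2
        rwa [hd.1 v u] at this

end Stmt19
namespace Stmt19
variable {X : Type*}

def keep3 (N : Set X) (u v w : X) : Prop :=
  (u ∈ N ∧ v ∈ N) ∨ (u ∈ N ∧ w ∈ N) ∨ (v ∈ N ∧ w ∈ N)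

namespace keep3
variable {N : Set X} {u v w : X}

lemma of12 (h1 : u ∈ N) (h2 : v ∈ N) : keep3 N u v w := Or.inl ⟨h1, h2⟩
lemma of13 (h1 : u ∈ N) (h2 : w ∈ N) : keep3 N u v w := Or.inr (Or.inl ⟨h1, h2⟩)
lemma of23 (h1 : v ∈ N) (h2 : w ∈ N) : keep3 N u v w := Or.inr (Or.inr ⟨h1, h2⟩)

lemma not12 (h1 : u ∉ N) (h2 : v ∉ N) : ¬ keep3 N u v w := fun hk =>
  hk.elim (fun p => h1 p.1) (fun hk => hk.elim (fun p => h1 p.1) (fun p => h2 p.1))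
lemma not13 (h1 : u ∉ N) (h2 : w ∉ N) : ¬ keep3 N u v w := fun hk =>
  hk.elim (fun p => h1 p.1) (fun hk => hk.elim (fun p => h1 p.1) (fun p => h2 p.2))
lemma not23 (h1 : v ∉ N) (h2 : w ∉ N) : ¬ keep3 N u v w := fun hk =>
  hk.elim (fun p => h1 p.2) (fun hk => hk.elim (fun p => h2 p.2) (fun p => h1 p.1))

lemma rot (h : keep3 N u v w) : keep3 N v w u :=
  h.elim (fun p => Or.inr (Or.inl ⟨p.2, p.1⟩))
    (fun hk => hk.elim (fun p => Or.inr (Or.inr ⟨p.2, p.1⟩)) (fun p => Or.inl p))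
lemma symm (h : keep3 N u v w) : keep3 N w v u :=
  h.elim (fun p => Or.inr (Or.inr ⟨p.2, p.1⟩))
    (fun hk => hk.elim (fun p => Or.inr (Or.inl ⟨p.2, p.1⟩)) (fun p => Or.inl ⟨p.2, p.1⟩))
lemma swap23 (h : keep3 N u v w) : keep3 N u w v :=
  h.elim (fun p => Or.inr (Or.inl p))
    (fun hk => hk.elim (fun p => Or.inl p) (fun p => Or.inr (Or.inr ⟨p.2, p.1⟩)))

lemma nrot (h : ¬ keep3 N u v w) : ¬ keep3 N v w u := fun hk => h (rot (rot hk))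
lemma nsymm (h : ¬ keep3 N u v w) : ¬ keep3 N w v u := fun hk => h (symm hk)
lemma nswap23 (h : ¬ keep3 N u v w) : ¬ keep3 N u w v := fun hk => h (swap23 hk)

end keep3

lemma flip_resolve_pos {A B C2 : Prop} (h : (A ∧ B) ∨ (¬A ∧ C2)) (hA : A) : B :=
  h.elim (fun p => p.2) (fun p => absurd hA p.1)

lemma flip_resolve_neg {A B C2 : Prop} (h : (A ∧ B) ∨ (¬A ∧ C2)) (hA : ¬A) : C2 :=
  h.elim (fun p => absurd p.1 hA) (fun p => p.2)

/-- Reversal of the `Nᶜ` arc of a circular order, given no-alternation. -/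
def flipO (C : CircOrder X) (N : Set X)
    (hA : ∀ p q r s : X, p ∈ N → q ∉ N → r ∈ N → s ∉ N →
      p ≠ q → p ≠ r → p ≠ s → q ≠ r → q ≠ s → r ≠ s → ¬ C.Chain ![p,q,r,s])
    (hA' : ∀ p q r s : X, p ∉ N → q ∈ N → r ∉ N → s ∈ N →
      p ≠ q → p ≠ r → p ≠ s → q ≠ r → q ≠ s → r ≠ s → ¬ C.Chain ![p,q,r,s]) :
    CircOrder X where
  btw u v w := (keep3 N u v w ∧ C.btw u v w) ∨ (¬ keep3 N u v w ∧ C.btw w v u)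
  distinct := by
    rintro u v w (⟨-, hb⟩ | ⟨-, hb⟩)
    · exact C.distinct hb
    · obtain ⟨h1, h2, h3⟩ := C.distinct hb
      exact ⟨h2.symm, h1.symm, h3.symm⟩
  total := by
    intro u v w h1 h2 h3
    classical
    by_cases hk : keep3 N u v w
    · rcases C.total h1 h2 h3 with hb | hb
      · exact Or.inl (Or.inl ⟨hk, hb⟩)
      · exact Or.inr (Or.inl ⟨keep3.symm hk, hb⟩)
    · rcases C.total h1 h2 h3 with hb | hb
      · exact Or.inr (Or.inr ⟨keep3.nsymm hk, hb⟩)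
      · exact Or.inl (Or.inr ⟨hk, hb⟩)
  asymm := by
    intro u v w h h'
    rcases h with ⟨hk, hb⟩ | ⟨hk, hb⟩ <;> rcases h' with ⟨hk', hb'⟩ | ⟨hk', hb'⟩
    · exact C.asymm hb hb'
    · exact hk' (keep3.symm hk)
    · exact hk (keep3.symm hk')
    · exact C.asymm hb' hb
  cyclic := by
    intro u v w h
    rcases h with ⟨hk, hb⟩ | ⟨hk, hb⟩
    · exact Or.inl ⟨keep3.rot hk, C.cyclic hb⟩
    · exact Or.inr ⟨keep3.nrot hk, btw_cyc2 C hb⟩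
  btw_trans := by
    intro u v w x h1 h2
    classical
    have hd1 : u ≠ v ∧ v ≠ w ∧ u ≠ w := by
      rcases h1 with ⟨-, hb⟩ | ⟨-, hb⟩
      · exact C.distinct hb
      · obtain ⟨a1, a2, a3⟩ := C.distinct hb
        exact ⟨a2.symm, a1.symm, a3.symm⟩
    have hd2 : u ≠ w ∧ w ≠ x ∧ u ≠ x := by
      rcases h2 with ⟨-, hb⟩ | ⟨-, hb⟩
      · exact C.distinct hb
      · obtain ⟨a1, a2, a3⟩ := C.distinct hb
        exact ⟨a2.symm, a1.symm, a3.symm⟩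
    obtain ⟨nuv, nvw, nuw⟩ := hd1
    obtain ⟨-, nwx, nux⟩ := hd2
    by_cases hvx : v = x
    · exfalso
      subst hvx
      rcases h1 with ⟨hk1, b1⟩ | ⟨hk1, b1⟩ <;> rcases h2 with ⟨hk2, b2⟩ | ⟨hk2, b2⟩
      · exact C.asymm b1 (C.cyclic b2)
      · exact hk2 (keep3.swap23 hk1)
      · exact hk1 (keep3.swap23 hk2)
      · exact C.asymm b1 (btw_cyc2 C b2)
    have nvx : v ≠ x := hvx
    by_cases hu : u ∈ N <;> by_cases hv : v ∈ N <;> by_cases hw : w ∈ N <;>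
      by_cases hx : x ∈ N
    · exact Or.inl ⟨keep3.of12 hu hv,
        C.btw_trans (flip_resolve_pos h1 (keep3.of12 hu hv))
          (flip_resolve_pos h2 (keep3.of12 hu hw))⟩
    · exact Or.inl ⟨keep3.of12 hu hv,
        C.btw_trans (flip_resolve_pos h1 (keep3.of12 hu hv))
          (flip_resolve_pos h2 (keep3.of12 hu hw))⟩
    · exact Or.inl ⟨keep3.of12 hu hv,
        C.btw_trans (flip_resolve_pos h1 (keep3.of12 hu hv))
          (flip_resolve_pos h2 (keep3.of13 hu hx))⟩
    · -- NNFF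
      have b1 : C.btw u v w := flip_resolve_pos h1 (keep3.of12 hu hv)
      have b2 : C.btw x w u := flip_resolve_neg h2 (keep3.not23 hw hx)
      refine Or.inl ⟨keep3.of12 hu hv, ?_⟩
      by_cases hbx : C.btw u v x
      · exact hbx
      · exfalso
        have huxv : C.btw u x v := btw_cyc2 C ((not_btw_iff C nuv nvx nux).mp hbx)
        exact hA u x v w hu hx hv hw nux nuv nuw (fun hh => nvx hh.symm) nwx.symm nvw
          (chain4_intro C nux nuv nuw (fun hh => nvx hh.symm) nwx.symm nvw huxv b1)
    · exact Or.inl ⟨keep3.of13 hu hx,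
        C.btw_trans (flip_resolve_pos h1 (keep3.of13 hu hw))
          (flip_resolve_pos h2 (keep3.of12 hu hw))⟩
    · -- NFNF
      exfalso
      have b1 : C.btw u v w := flip_resolve_pos h1 (keep3.of13 hu hw)
      have b2 : C.btw u w x := flip_resolve_pos h2 (keep3.of12 hu hw)
      exact hA u v w x hu hv hw hx nuv nuw nux nvw nvx nwx
        (chain4_intro C nuv nuw nux nvw nvx nwx b1 b2)
    · -- NFFN
      have b1 : C.btw w v u := flip_resolve_neg h1 (keep3.not23 hv hw)
      have b2 : C.btw u w x := flip_resolve_pos h2 (keep3.of13 hu hx)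
      refine Or.inl ⟨keep3.of13 hu hx, ?_⟩
      by_cases hbx : C.btw u v x
      · exact hbx
      · exfalso
        have huxv : C.btw u x v := btw_cyc2 C ((not_btw_iff C nuv nvx nux).mp hbx)
        exact hA u w x v hu hw hx hv nuw nux nuv nwx (fun hh => nvw hh.symm) nvx.symm
          (chain4_intro C nuw nux nuv nwx (fun hh => nvw hh.symm) nvx.symm b2 huxv)
    · -- NFFF
      have b1 : C.btw w v u := flip_resolve_neg h1 (keep3.not23 hv hw)
      have b2 : C.btw x w u := flip_resolve_neg h2 (keep3.not23 hw hx)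
      exact Or.inr ⟨keep3.not23 hv hx,
        C.cyclic (C.btw_trans (btw_cyc2 C b2) (btw_cyc2 C b1))⟩
    · exact Or.inl ⟨keep3.of23 hv hx,
        C.btw_trans (flip_resolve_pos h1 (keep3.of23 hv hw))
          (flip_resolve_pos h2 (keep3.of23 hw hx))⟩
    · -- FNNF
      have b1 : C.btw u v w := flip_resolve_pos h1 (keep3.of23 hv hw)
      have b2 : C.btw x w u := flip_resolve_neg h2 (keep3.not13 hu hx)
      refine Or.inr ⟨keep3.not13 hu hx, ?_⟩
      by_cases hbx : C.btw x v u
      · exact hbx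
      · exfalso
        have huvx : C.btw u v x := (not_btw_iff C nvx.symm nuv.symm nux.symm).mp hbx
        have huxw : C.btw u x w := btw_cyc2 C b2
        exact hA' u v x w hu hv hx hw nuv nux nuw nvx nvw nwx.symm
          (chain4_intro C nuv nux nuw nvx nvw nwx.symm huvx huxw)
    · -- FNFN
      exfalso
      have b1 : C.btw w v u := flip_resolve_neg h1 (keep3.not13 hu hw)
      have b2 : C.btw x w u := flip_resolve_neg h2 (keep3.not12 hu hw)
      have huxw : C.btw u x w := btw_cyc2 C b2
      have huwv : C.btw u w v := btw_cyc2 C b1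
      exact hA' u x w v hu hx hw hv nux nuw nuv nwx.symm nvx.symm nvw.symm
        (chain4_intro C nux nuw nuv nwx.symm nvx.symm nvw.symm huxw huwv)
    · -- FNFF
      have b1 : C.btw w v u := flip_resolve_neg h1 (keep3.not13 hu hw)
      have b2 : C.btw x w u := flip_resolve_neg h2 (keep3.not12 hu hw)
      exact Or.inr ⟨keep3.not13 hu hx,
        C.cyclic (C.btw_trans (btw_cyc2 C b2) (btw_cyc2 C b1))⟩
    · -- FFNN
      have b1 : C.btw w v u := flip_resolve_neg h1 (keep3.not12 hu hv)
      have b2 : C.btw u w x := flip_resolve_pos h2 (keep3.of23 hw hx)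
      refine Or.inr ⟨keep3.not12 hu hv, ?_⟩
      by_cases hbx : C.btw x v u
      · exact hbx
      · exfalso
        have huvx : C.btw u v x := (not_btw_iff C nvx.symm nuv.symm nux.symm).mp hbx
        have huwv : C.btw u w v := btw_cyc2 C b1
        exact hA' u w v x hu hw hv hx nuw nuv nux nvw.symm nwx nvx
          (chain4_intro C nuw nuv nux nvw.symm nwx nvx huwv huvx)
    · -- FFNF
      have b1 : C.btw w v u := flip_resolve_neg h1 (keep3.not12 hu hv)
      have b2 : C.btw x w u := flip_resolve_neg h2 (keep3.not13 hu hx)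
      exact Or.inr ⟨keep3.not12 hu hv,
        C.cyclic (C.btw_trans (btw_cyc2 C b2) (btw_cyc2 C b1))⟩
    · -- FFFN
      have b1 : C.btw w v u := flip_resolve_neg h1 (keep3.not12 hu hv)
      have b2 : C.btw x w u := flip_resolve_neg h2 (keep3.not12 hu hw)
      exact Or.inr ⟨keep3.not12 hu hv,
        C.cyclic (C.btw_trans (btw_cyc2 C b2) (btw_cyc2 C b1))⟩
    · have b1 : C.btw w v u := flip_resolve_neg h1 (keep3.not12 hu hv)
      have b2 : C.btw x w u := flip_resolve_neg h2 (keep3.not12 hu hw)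
      exact Or.inr ⟨keep3.not12 hu hv,
        C.cyclic (C.btw_trans (btw_cyc2 C b2) (btw_cyc2 C b1))⟩

lemma flipO_btw {C : CircOrder X} {N : Set X} {hA hA'} (u v w : X) :
    (flipO C N hA hA').btw u v w ↔
      (keep3 N u v w ∧ C.btw u v w) ∨ (¬ keep3 N u v w ∧ C.btw w v u) := Iff.rfl

end Stmt19
namespace Stmt19
variable {X : Type*}

lemma flip_sqc {C : CircOrder X} {d : X → X → ℝ} (hd : Dissim d) (h : sqcCompat C d)
    {N : Set X} {δ : ℝ}
    (hwle : ∀ u v : X, (u ∈ N ↔ v ∈ N) → d u v ≤ δ)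
    (hcr : ∀ u v : X, u ∈ N → v ∉ N → δ < d u v)
    {hA hA'} : sqcCompat (flipO C N hA hA') d := by
  classical
  intro x y z t hpw hch
  obtain ⟨n1, n2, n3, n4, n5, n6⟩ := pw4_elim hpw
  obtain ⟨c1, c2, c3, c4⟩ := (chain4_iff (flipO C N hA hA') n1 n2 n3 n4 n5 n6).mp hch
  by_cases hx : x ∈ N <;> by_cases hy : y ∈ N <;> by_cases hz : z ∈ N <;>
    by_cases ht : t ∈ N
  -- NNNN
  · exact sqc4 h n1 n2 n3 n4 n5 n6 ((chain4_iff C n1 n2 n3 n4 n5 n6).mpr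
      ⟨flip_resolve_pos c1 (keep3.of12 hx hy), flip_resolve_pos c2 (keep3.of12 hx hy),
       flip_resolve_pos c3 (keep3.of12 hx hz), flip_resolve_pos c4 (keep3.of12 hy hz)⟩)
  -- NNNF
  · exact sqc4 h n1 n2 n3 n4 n5 n6 ((chain4_iff C n1 n2 n3 n4 n5 n6).mpr
      ⟨flip_resolve_pos c1 (keep3.of12 hx hy), flip_resolve_pos c2 (keep3.of12 hx hy),
       flip_resolve_pos c3 (keep3.of12 hx hz), flip_resolve_pos c4 (keep3.of12 hy hz)⟩)
  -- NNFN
  · exact sqc4 h n1 n2 n3 n4 n5 n6 ((chain4_iff C n1 n2 n3 n4 n5 n6).mpr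
      ⟨flip_resolve_pos c1 (keep3.of12 hx hy), flip_resolve_pos c2 (keep3.of12 hx hy),
       flip_resolve_pos c3 (keep3.of13 hx ht), flip_resolve_pos c4 (keep3.of13 hy ht)⟩)
  -- NNFF : {x,y} ⊆ N
  · have hle : d t z ≤ δ := hwle t z (iff_of_false ht hz)
    have hlt : δ < d x z := hcr x z hx hz
    calc min (d y z) (d t z) ≤ d t z := min_le_right _ _
    _ ≤ δ := hle
    _ < d x z := hlt
  -- NFNN
  · exact sqc4 h n1 n2 n3 n4 n5 n6 ((chain4_iff C n1 n2 n3 n4 n5 n6).mpr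
      ⟨flip_resolve_pos c1 (keep3.of13 hx hz), flip_resolve_pos c2 (keep3.of13 hx ht),
       flip_resolve_pos c3 (keep3.of12 hx hz), flip_resolve_pos c4 (keep3.of23 hz ht)⟩)
  -- NFNF : x,z ∈ N, y,t ∉ : impossible
  · exfalso
    have b1 : C.btw x y z := flip_resolve_pos c1 (keep3.of13 hx hz)
    have b3 : C.btw x z t := flip_resolve_pos c3 (keep3.of12 hx hz)
    exact hA x y z t hx hy hz ht n1 n2 n3 n4 n5 n6
      (chain4_intro C n1 n2 n3 n4 n5 n6 b1 b3)
  -- NFFN : {x,t} ⊆ N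
  · have hle : d y z ≤ δ := hwle y z (iff_of_false hy hz)
    have hlt : δ < d x z := hcr x z hx hz
    calc min (d y z) (d t z) ≤ d y z := min_le_left _ _
    _ ≤ δ := hle
    _ < d x z := hlt
  -- NFFF : x ∈ N only
  · have b1 : C.btw z y x := flip_resolve_neg c1 (keep3.not23 hy hz)
    have b2 : C.btw t y x := flip_resolve_neg c2 (keep3.not23 hy ht)
    have b3 : C.btw t z x := flip_resolve_neg c3 (keep3.not23 hz ht)
    have b4 : C.btw t z y := flip_resolve_neg c4 (keep3.not12 hy hz)
    have hcc : C.Chain ![t,z,y,x] := (chain4_iff C n6.symm n5.symm n3.symm n4.symm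
      n2.symm n1.symm).mpr ⟨b4, b3, b2, b1⟩
    have := sqc4r3 h n6.symm n5.symm n3.symm n4.symm n2.symm n1.symm hcc
    rwa [min_comm] at this
  -- FNNN
  · exact sqc4 h n1 n2 n3 n4 n5 n6 ((chain4_iff C n1 n2 n3 n4 n5 n6).mpr
      ⟨flip_resolve_pos c1 (keep3.of23 hy hz), flip_resolve_pos c2 (keep3.of23 hy ht),
       flip_resolve_pos c3 (keep3.of23 hz ht), flip_resolve_pos c4 (keep3.of12 hy hz)⟩)
  -- FNNF : {y,z} ⊆ N
  · have hle : d y z ≤ δ := hwle y z (iff_of_true hy hz)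
    have hlt : δ < d x z := by
      have := hcr z x hz hx
      rwa [hd.1 z x] at this
    calc min (d y z) (d t z) ≤ d y z := min_le_left _ _
    _ ≤ δ := hle
    _ < d x z := hlt
  -- FNFN : y,t ∈ N, x,z ∉ : impossible
  · exfalso
    have b1 : C.btw z y x := flip_resolve_neg c1 (keep3.not13 hx hz)
    have b3 : C.btw t z x := flip_resolve_neg c3 (keep3.not12 hx hz)
    have hxz : C.btw x z y := btw_cyc2 C b1
    have hxt : C.btw x t z := btw_cyc2 C b3
    exact hA' x t z y hx ht hz hy n3 n2 n1 n6.symm n5.symm n4.symm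
      (chain4_intro C n3 n2 n1 n6.symm n5.symm n4.symm hxt hxz)
  -- FNFF : k ≤ 1, reversed
  · have b1 : C.btw z y x := flip_resolve_neg c1 (keep3.not13 hx hz)
    have b2 : C.btw t y x := flip_resolve_neg c2 (keep3.not13 hx ht)
    have b3 : C.btw t z x := flip_resolve_neg c3 (keep3.not12 hx hz)
    have b4 : C.btw t z y := flip_resolve_neg c4 (keep3.not23 hz ht)
    have hcc : C.Chain ![t,z,y,x] := (chain4_iff C n6.symm n5.symm n3.symm n4.symm
      n2.symm n1.symm).mpr ⟨b4, b3, b2, b1⟩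
    have := sqc4r3 h n6.symm n5.symm n3.symm n4.symm n2.symm n1.symm hcc
    rwa [min_comm] at this
  -- FFNN : {z,t} ⊆ N
  · have hle : d t z ≤ δ := hwle t z (iff_of_true ht hz)
    have hlt : δ < d x z := by
      have := hcr z x hz hx
      rwa [hd.1 z x] at this
    calc min (d y z) (d t z) ≤ d t z := min_le_right _ _
    _ ≤ δ := hle
    _ < d x z := hlt
  -- FFNF : k ≤ 1, reversed
  · have b1 : C.btw z y x := flip_resolve_neg c1 (keep3.not12 hx hy)
    have b2 : C.btw t y x := flip_resolve_neg c2 (keep3.not12 hx hy)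
    have b3 : C.btw t z x := flip_resolve_neg c3 (keep3.not13 hx ht)
    have b4 : C.btw t z y := flip_resolve_neg c4 (keep3.not13 hy ht)
    have hcc : C.Chain ![t,z,y,x] := (chain4_iff C n6.symm n5.symm n3.symm n4.symm
      n2.symm n1.symm).mpr ⟨b4, b3, b2, b1⟩
    have := sqc4r3 h n6.symm n5.symm n3.symm n4.symm n2.symm n1.symm hcc
    rwa [min_comm] at this
  -- FFFN : k ≤ 1, reversed
  · have b1 : C.btw z y x := flip_resolve_neg c1 (keep3.not12 hx hy)
    have b2 : C.btw t y x := flip_resolve_neg c2 (keep3.not12 hx hy)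
    have b3 : C.btw t z x := flip_resolve_neg c3 (keep3.not12 hx hz)
    have b4 : C.btw t z y := flip_resolve_neg c4 (keep3.not12 hy hz)
    have hcc : C.Chain ![t,z,y,x] := (chain4_iff C n6.symm n5.symm n3.symm n4.symm
      n2.symm n1.symm).mpr ⟨b4, b3, b2, b1⟩
    have := sqc4r3 h n6.symm n5.symm n3.symm n4.symm n2.symm n1.symm hcc
    rwa [min_comm] at this
  -- FFFF : reversed
  · have b1 : C.btw z y x := flip_resolve_neg c1 (keep3.not12 hx hy)
    have b2 : C.btw t y x := flip_resolve_neg c2 (keep3.not12 hx hy)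
    have b3 : C.btw t z x := flip_resolve_neg c3 (keep3.not12 hx hz)
    have b4 : C.btw t z y := flip_resolve_neg c4 (keep3.not12 hy hz)
    have hcc : C.Chain ![t,z,y,x] := (chain4_iff C n6.symm n5.symm n3.symm n4.symm
      n2.symm n1.symm).mpr ⟨b4, b3, b2, b1⟩
    have := sqc4r3 h n6.symm n5.symm n3.symm n4.symm n2.symm n1.symm hcc
    rwa [min_comm] at this

end Stmt19
namespace Stmt19
variable {X : Type*}

theorem backward [Fintype X] {d : X → X → ℝ} (hd : Dissim d) {C : CircOrder X}
    (h : sqcCompat C d) {N F : Set X} {δ : ℝ}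
    (hUF : N ∪ F = Set.univ) (hNF : N ∩ F = ∅)
    (hN : 1 < N.ncard) (hF : 1 < F.ncard)
    (hXor : ∀ u v : X, δ < d u v ↔ Xor' (u ∈ N) (v ∈ N)) :
    ∃ C2 : CircOrder X, sqcCompat C2 d ∧
      ¬ (∀ u v w : X, C2.btw u v w ↔ C.btw u v w) ∧
      ¬ (∀ u v w : X, C2.btw u v w ↔ C.btw w v u) := by
  classical
  have hwle : ∀ u v : X, (u ∈ N ↔ v ∈ N) → d u v ≤ δ := by
    intro u v hiff
    by_contra hlt
    push_neg at hlt
    rcases (hXor u v).mp hlt with ⟨h1, h2⟩ | ⟨h1, h2⟩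
    · exact h2 (hiff.mp h1)
    · exact h2 (hiff.mpr h1)
  have hcr : ∀ u v : X, u ∈ N → v ∉ N → δ < d u v := fun u v h1 h2 =>
    (hXor u v).mpr (Or.inl ⟨h1, h2⟩)
  have hA : ∀ p q r s : X, p ∈ N → q ∉ N → r ∈ N → s ∉ N →
      p ≠ q → p ≠ r → p ≠ s → q ≠ r → q ≠ s → r ≠ s → ¬ C.Chain ![p,q,r,s] := by
    intro p q r s hp hq hr hs m1 m2 m3 m4 m5 m6 hch
    have s1 := sqc4 h m1 m2 m3 m4 m5 m6 hch
    have h1 : δ < d q r := by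
      have := hcr r q hr hq
      rwa [hd.1 r q] at this
    have h2 : δ < d s r := by
      have := hcr r s hr hs
      rwa [hd.1 r s] at this
    have h3 : d p r ≤ δ := hwle p r (iff_of_true hp hr)
    rcases min_lt_iff.mp s1 with hx | hx <;> linarith
  have hA' : ∀ p q r s : X, p ∉ N → q ∈ N → r ∉ N → s ∈ N →
      p ≠ q → p ≠ r → p ≠ s → q ≠ r → q ≠ s → r ≠ s → ¬ C.Chain ![p,q,r,s] := by
    intro p q r s hp hq hr hs m1 m2 m3 m4 m5 m6 hch
    have s1 := sqc4 h m1 m2 m3 m4 m5 m6 hch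
    have h1 : δ < d q r := hcr q r hq hr
    have h2 : δ < d s r := hcr s r hs hr
    have h3 : d p r ≤ δ := hwle p r (iff_of_false hp hr)
    rcases min_lt_iff.mp s1 with hx | hx <;> linarith
  refine ⟨flipO C N hA hA', flip_sqc hd h hwle hcr, ?_, ?_⟩
  · -- not equal to C
    intro hall
    obtain ⟨f1, f2, hf1, hf2, hf12⟩ := (Set.one_lt_ncard_iff F.toFinite).mp hF
    have hf1N : f1 ∉ N := fun hh => (Set.eq_empty_iff_forall_notMem.mp hNF f1) ⟨hh, hf1⟩
    have hf2N : f2 ∉ N := fun hh => (Set.eq_empty_iff_forall_notMem.mp hNF f2) ⟨hh, hf2⟩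
    obtain ⟨n1', -, hn1, -, -⟩ := (Set.one_lt_ncard_iff N.toFinite).mp hN
    have hn1f1 : n1' ≠ f1 := fun hh => hf1N (hh ▸ hn1)
    have hn1f2 : n1' ≠ f2 := fun hh => hf2N (hh ▸ hn1)
    have hnk : ¬ keep3 N n1' f1 f2 := keep3.not23 hf1N hf2N
    rcases C.total hn1f1 hf12 hn1f2 with hb | hb
    · have h2 : (flipO C N hA hA').btw n1' f1 f2 := (hall n1' f1 f2).mpr hb
      have h3 : C.btw f2 f1 n1' := flip_resolve_neg h2 hnk
      exact C.asymm hb h3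
    · have h2 : (flipO C N hA hA').btw n1' f1 f2 := Or.inr ⟨hnk, hb⟩
      exact C.asymm ((hall n1' f1 f2).mp h2) hb
  · -- not the reverse of C
    intro hall
    obtain ⟨m1, m2, hm1, hm2, hm12⟩ := (Set.one_lt_ncard_iff N.toFinite).mp hN
    obtain ⟨f1, -, hf1, -, -⟩ := (Set.one_lt_ncard_iff F.toFinite).mp hF
    have hf1N : f1 ∉ N := fun hh => (Set.eq_empty_iff_forall_notMem.mp hNF f1) ⟨hh, hf1⟩
    have hm1f : m1 ≠ f1 := fun hh => hf1N (hh ▸ hm1)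
    have hm2f : m2 ≠ f1 := fun hh => hf1N (hh ▸ hm2)
    have hk : keep3 N m1 m2 f1 := keep3.of12 hm1 hm2
    rcases C.total hm12 hm2f hm1f with hb | hb
    · have h2 : (flipO C N hA hA').btw m1 m2 f1 := Or.inl ⟨hk, hb⟩
      exact C.asymm hb ((hall m1 m2 f1).mp h2)
    · have h2 : (flipO C N hA hA').btw m1 m2 f1 := (hall m1 m2 f1).mpr hb
      exact C.asymm hb (flip_resolve_pos h2 hk)
end Stmt19

theorem stmt19 {X : Type*} [Fintype X] (d : X → X → ℝ) (hd : Dissim d)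
    (hC : ∃ C : CircOrder X, sqcCompat C d) :
    (∃ C C' : CircOrder X, sqcCompat C d ∧ sqcCompat C' d ∧
      ¬ (∀ u v w : X, C'.btw u v w ↔ C.btw u v w) ∧
      ¬ (∀ u v w : X, C'.btw u v w ↔ C.btw w v u)) ↔
    (∃ (N F : Set X) (δ : ℝ), 0 ≤ δ ∧ N ∪ F = Set.univ ∧ N ∩ F = ∅ ∧
      1 < N.ncard ∧ 1 < F.ncard ∧
      ∀ u v : X, δ < d u v ↔ Xor' (u ∈ N) (v ∈ N)) := by
  constructor
  · rintro ⟨C, C', h, h', hne, hnr⟩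
    exact Stmt19.forward hd h h' hne hnr
  · rintro ⟨N, F, δ, hδ0, hUF, hNF, hN, hF, hXor⟩
    obtain ⟨C, hCsqc⟩ := hC
    obtain ⟨C2, hsqc2, hne, hnr⟩ := Stmt19.backward hd hCsqc hUF hNF hN hF hXor
    exact ⟨C, C2, hCsqc, hsqc2, hne, hnr⟩
end
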